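/- arXiv:2008.13688 — 13 statements merged into one kernel-verified Lean document; each statement's English description precedes it below -/
import Mathlib

section
/- Let A be a commutative integral residuated lattice. Then the twist-product K(A) is a commutative residuated lattice: the relation (a,b) ≤ (c,d) iff a ≤ c and d ≤ b is a lattice order on A × A with join (a,b) ∨ (c,d) = (a∨c, b∧d) and meet (a,b) ∧ (c,d) = (a∧c, b∨d); the product (a,b)·(c,d) = (a·c, (a→d) ∧ (c→b)) is commutative and associative with unit (1,1); and residuation holds: (a,b)·(c,d) ≤ (e,f) if and only if (a,b) ≤ (c,d) → (e,f), where (c,d) → (e,f) = ((c→e) ∧ (f→d), c·f). -/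
class CRL (α : Type*) extends Lattice α, CommMonoid α where
  himp : α → α → α
  resid : ∀ a b c : α, a * b ≤ c ↔ a ≤ himp b c

class CIRL (α : Type*) extends CRL α where
  le_one : ∀ a : α, a ≤ 1

class BCRL (α : Type*) extends CIRL α, Zero α where
  zero_le : ∀ a : α, (0 : α) ≤ a

namespace Twist
variable {α : Type*} [CRL α]

/-- The twist-product order: `(a,b) ≤ (c,d)` iff `a ≤ c` and `d ≤ b`. -/
def kle (x y : α × α) : Prop := x.1 ≤ y.1 ∧ y.2 ≤ x.2

/-- Join of the twist-product: `(a,b) ∨ (c,d) = (a ∨ c, b ∧ d)`. -/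
def kjoin (x y : α × α) : α × α := (x.1 ⊔ y.1, x.2 ⊓ y.2)

/-- Meet of the twist-product: `(a,b) ∧ (c,d) = (a ∧ c, b ∨ d)`. -/
def kmeet (x y : α × α) : α × α := (x.1 ⊓ y.1, x.2 ⊔ y.2)

/-- Product of the twist-product: `(a,b)·(c,d) = (a·c, (a→d) ∧ (c→b))`. -/
def kmul (x y : α × α) : α × α := (x.1 * y.1, CRL.himp x.1 y.2 ⊓ CRL.himp y.1 x.2)

/-- Implication of the twist-product: `(a,b) → (c,d) = ((a→c) ∧ (d→b), a·d)`. -/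
def khimp (x y : α × α) : α × α := (CRL.himp x.1 y.1 ⊓ CRL.himp y.2 x.2, x.1 * y.2)

end Twist

section Helpers
variable {α : Type*} [CRL α]

lemma tw_resid {a b c : α} : a * b ≤ c ↔ a ≤ CRL.himp b c := CRL.resid a b c

lemma tw_mul_mono {a b : α} (h : a ≤ b) (c : α) : a * c ≤ b * c :=
  tw_resid.mpr (h.trans (tw_resid.mp le_rfl))

lemma tw_himp_inf (a b c : α) :
    CRL.himp a (b ⊓ c) = CRL.himp a b ⊓ CRL.himp a c := by
  apply le_antisymm
  · exact le_inf (tw_resid.mp ((tw_resid.mpr le_rfl).trans inf_le_left))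
      (tw_resid.mp ((tw_resid.mpr le_rfl).trans inf_le_right))
  · exact tw_resid.mp (le_inf
      ((tw_mul_mono inf_le_left a).trans (tw_resid.mpr le_rfl))
      ((tw_mul_mono inf_le_right a).trans (tw_resid.mpr le_rfl)))

lemma tw_himp_mul (a b c : α) :
    CRL.himp (a * b) c = CRL.himp a (CRL.himp b c) := by
  apply le_antisymm
  · exact tw_resid.mp (tw_resid.mp (by rw [mul_assoc]; exact tw_resid.mpr le_rfl))
  · refine tw_resid.mp ?_
    rw [← mul_assoc]
    exact (tw_mul_mono (tw_resid.mpr le_rfl) b).trans (tw_resid.mpr le_rfl)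

lemma tw_himp_comm (a b c : α) :
    CRL.himp a (CRL.himp b c) = CRL.himp b (CRL.himp a c) := by
  rw [← tw_himp_mul, mul_comm, tw_himp_mul]

lemma tw_one_himp (a : α) : CRL.himp (1 : α) a = a :=
  le_antisymm (by simpa using tw_resid.mpr (le_refl (CRL.himp (1 : α) a)))
    (tw_resid.mp (by simp))

end Helpers

open Twist in
/-- the twist-product `K(A)` of a commutative integral residuated
lattice is a commutative residuated lattice: `kle` is a partial order whose
binary suprema and infima are given by `kjoin` and `kmeet`, `kmul` is a
commutative and associative operation with unit `(1,1)`, and residuation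
holds with respect to `khimp`. -/
theorem twist_product_is_CRL {α : Type*} [CIRL α] :
    (∀ x : α × α, kle x x) ∧
    (∀ x y : α × α, kle x y → kle y x → x = y) ∧
    (∀ x y z : α × α, kle x y → kle y z → kle x z) ∧
    (∀ x y z : α × α, kle (kjoin x y) z ↔ kle x z ∧ kle y z) ∧
    (∀ x y z : α × α, kle z (kmeet x y) ↔ kle z x ∧ kle z y) ∧
    (∀ x y : α × α, kmul x y = kmul y x) ∧
    (∀ x y z : α × α, kmul (kmul x y) z = kmul x (kmul y z)) ∧
    (∀ x : α × α, kmul x ((1 : α), (1 : α)) = x) ∧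
    (∀ x y z : α × α, kle (kmul x y) z ↔ kle x (khimp y z)) := by
  refine ⟨fun x => ⟨le_rfl, le_rfl⟩,
    fun x y h1 h2 => Prod.ext (le_antisymm h1.1 h2.1) (le_antisymm h2.2 h1.2),
    fun x y z h1 h2 => ⟨h1.1.trans h2.1, h2.2.trans h1.2⟩,
    fun x y z => ?_, fun x y z => ?_, fun x y => ?_, fun x y z => ?_,
    fun x => ?_, fun x y z => ?_⟩
  · constructor
    · rintro ⟨h1, h2⟩
      exact ⟨⟨le_sup_left.trans h1, h2.trans inf_le_left⟩,
             ⟨le_sup_right.trans h1, h2.trans inf_le_right⟩⟩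
    · rintro ⟨⟨a1, a2⟩, ⟨b1, b2⟩⟩
      exact ⟨sup_le a1 b1, le_inf a2 b2⟩
  · constructor
    · rintro ⟨h1, h2⟩
      exact ⟨⟨h1.trans inf_le_left, le_sup_left.trans h2⟩,
             ⟨h1.trans inf_le_right, le_sup_right.trans h2⟩⟩
    · rintro ⟨⟨a1, a2⟩, ⟨b1, b2⟩⟩
      exact ⟨le_inf a1 b1, sup_le a2 b2⟩
  · simp [kmul, mul_comm, inf_comm]
  · simp only [kmul, tw_himp_inf, tw_himp_mul]
    refine Prod.ext (mul_assoc _ _ _) ?_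
    simp only
    rw [tw_himp_comm z.1 x.1 y.2, tw_himp_comm z.1 y.1 x.2]
    ac_rfl
  · refine Prod.ext (mul_one _) ?_
    simp only [kmul]
    rw [tw_one_himp]
    exact inf_eq_right.mpr (tw_resid.mp (CIRL.le_one _))
  · simp only [kmul, khimp, kle, le_inf_iff]
    constructor
    · rintro ⟨h1, h2, h3⟩
      exact ⟨⟨tw_resid.mp h1, tw_resid.mp (by rw [mul_comm]; exact tw_resid.mpr h2)⟩,
        by rw [mul_comm]; exact tw_resid.mpr h3⟩
    · rintro ⟨⟨h1, h2⟩, h3⟩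
      exact ⟨tw_resid.mpr h1, tw_resid.mp (by rw [mul_comm]; exact tw_resid.mpr h2),
        tw_resid.mp (by rw [mul_comm]; exact h3)⟩
end

section
/- Let A be a commutative integral residuated lattice and K(A) its twist-product with unit 1 = (1,1); write ∼x := x → (1,1). Then: (i) K(A) is 1-involutive, i.e. ∼∼x = x for all x ∈ K(A); (ii) K(A) is 1-distributive, i.e. the lattice distributive laws x ∧ (y ∨ z) = (x∧y) ∨ (x∧z) and x ∨ (y ∧ z) = (x∨y) ∧ (x∨z) hold in K(A) whenever at least one of x, y, z equals (1,1); (iii) K(A) satisfies (K1): (x·y) ∧ (1,1) = (x ∧ (1,1))·(y ∧ (1,1)); and (iv) K(A) satisfies (K2): ((x ∧ (1,1)) → y) ∧ ((∼y ∧ (1,1)) → ∼x) = x → y. Moreover, if A has a least element 0, then (0,1) is the least element of K(A). -/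
section Aux
variable {α : Type*} [CIRL α]

lemma himp_one' (a : α) : CRL.himp a 1 = 1 :=
  le_antisymm (CIRL.le_one _) ((CRL.resid 1 a 1).1 (CIRL.le_one _))

lemma one_himp' (a : α) : CRL.himp 1 a = a :=
  le_antisymm (by simpa using (CRL.resid (CRL.himp 1 a) 1 a).2 le_rfl)
    ((CRL.resid a 1 a).1 (by simp))

lemma inf_one' (a : α) : a ⊓ 1 = a := inf_eq_left.2 (CIRL.le_one a)
lemma one_inf' (a : α) : 1 ⊓ a = a := inf_eq_right.2 (CIRL.le_one a)
lemma sup_one' (a : α) : a ⊔ 1 = 1 := sup_eq_right.2 (CIRL.le_one a)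
lemma one_sup' (a : α) : 1 ⊔ a = 1 := sup_eq_left.2 (CIRL.le_one a)

end Aux

open Twist in
/-- the twist-product `K(A)` is 1-involutive, 1-distributive and
satisfies (K1) and (K2); moreover if `A` has a least element `z`, then `(z,1)`
is the least element of `K(A)`. Here `∼x = x → (1,1)`. -/
theorem twist_product_properties {α : Type*} [CIRL α] :
    (∀ x : α × α, khimp (khimp x ((1 : α), (1 : α))) ((1 : α), (1 : α)) = x) ∧
    (∀ x y z : α × α,
      (x = ((1 : α), (1 : α)) ∨ y = ((1 : α), (1 : α)) ∨ z = ((1 : α), (1 : α))) →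
      kmeet x (kjoin y z) = kjoin (kmeet x y) (kmeet x z) ∧
      kjoin x (kmeet y z) = kmeet (kjoin x y) (kjoin x z)) ∧
    (∀ x y : α × α, kmeet (kmul x y) ((1 : α), (1 : α)) =
      kmul (kmeet x ((1 : α), (1 : α))) (kmeet y ((1 : α), (1 : α)))) ∧
    (∀ x y : α × α,
      kmeet (khimp (kmeet x ((1 : α), (1 : α))) y)
        (khimp (kmeet (khimp y ((1 : α), (1 : α))) ((1 : α), (1 : α)))
          (khimp x ((1 : α), (1 : α)))) = khimp x y) ∧
    (∀ z : α, (∀ a : α, z ≤ a) → ∀ x : α × α, kle ((z, (1 : α)) : α × α) x) := by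

  refine ⟨?_, ?_, ?_, ?_, ?_⟩
  · rintro ⟨a, b⟩
    simp [khimp, himp_one', one_himp', one_inf', inf_one', CIRL.le_one]
  · rintro ⟨a, b⟩ ⟨c, d⟩ ⟨e, f⟩ (h | h | h) <;>
      (obtain ⟨rfl, rfl⟩ : _ ∧ _ := ⟨congrArg Prod.fst h, congrArg Prod.snd h⟩) <;>
      constructor <;>
      simp [kmeet, kjoin, inf_one', one_inf', sup_one', one_sup', Prod.ext_iff]
  · rintro ⟨a, b⟩ ⟨c, d⟩
    simp [kmeet, kmul, himp_one', inf_one', sup_one']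
  · rintro ⟨a, b⟩ ⟨c, d⟩
    simp [kmeet, khimp, himp_one', one_himp', inf_one', one_inf', sup_one',
      mul_comm, mul_one, Prod.ext_iff]
  · intro z hz x
    exact ⟨hz _, CIRL.le_one _⟩
end

section
/- Let B be a bounded K-lattice. Then the negative cone B⁻ = {b ∈ B : b ≤ 1} contains 0 and 1, is closed under ∨, ∧ and ·, and, with the implication a →⁻ b := (a → b) ∧ 1, it is a bounded commutative integral residuated lattice: 1 is its greatest element, 0 its least element, and for all a, b, c ∈ B⁻, a·b ≤ c if and only if a ≤ b →⁻ c. -/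
class KLattice (α : Type*) extends CRL α where
  one_involutive : ∀ x : α, himp (himp x 1) 1 = x
  one_distrib_meet : ∀ x y z : α, (x = 1 ∨ y = 1 ∨ z = 1) →
    x ⊓ (y ⊔ z) = (x ⊓ y) ⊔ (x ⊓ z)
  one_distrib_join : ∀ x y z : α, (x = 1 ∨ y = 1 ∨ z = 1) →
    x ⊔ (y ⊓ z) = (x ⊔ y) ⊓ (x ⊔ z)
  K1 : ∀ x y : α, (x * y) ⊓ 1 = (x ⊓ 1) * (y ⊓ 1)
  K2 : ∀ x y : α, himp (x ⊓ 1) y ⊓ himp (himp y 1 ⊓ 1) (himp x 1) = himp x y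

class BKLattice (α : Type*) extends KLattice α, Zero α where
  zero_le : ∀ a : α, (0 : α) ≤ a

lemma crl_mul_le_mul_right {α : Type*} [CRL α] {x y : α} (h : x ≤ y) (z : α) :
    x * z ≤ y * z :=
  (CRL.resid x z (y*z)).mpr (le_trans h ((CRL.resid y z (y*z)).mp le_rfl))

/-- the negative cone `B⁻ = {b : b ≤ 1}` of a bounded K-lattice
contains `0` and `1`, is closed under `∨`, `∧`, `·` (and under the cone
implication `a →⁻ b = (a → b) ∧ 1`), has `1` as greatest and `0` as least
element, and satisfies residuation with respect to `→⁻`, so it is a bounded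
commutative integral residuated lattice. -/
theorem negative_cone_is_BCRL {α : Type*} [BKLattice α] :
    (0 : α) ∈ {b : α | b ≤ 1} ∧ (1 : α) ∈ {b : α | b ≤ 1} ∧
    (∀ a b : α, a ≤ 1 → b ≤ 1 →
      a ⊔ b ∈ {b : α | b ≤ 1} ∧ a ⊓ b ∈ {b : α | b ≤ 1} ∧
      a * b ∈ {b : α | b ≤ 1} ∧ CRL.himp a b ⊓ 1 ∈ {b : α | b ≤ 1}) ∧
    (∀ a : α, a ≤ 1 → a ≤ 1 ∧ (0 : α) ≤ a) ∧
    (∀ a b c : α, a ≤ 1 → b ≤ 1 → c ≤ 1 →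
      (a * b ≤ c ↔ a ≤ CRL.himp b c ⊓ 1)) := by
  refine ⟨BKLattice.zero_le 1, le_rfl, ?_, fun a ha => ⟨ha, BKLattice.zero_le a⟩, ?_⟩
  · intro a b ha hb
    refine ⟨sup_le ha hb, le_trans inf_le_left ha, ?_, inf_le_right⟩
    calc a * b ≤ 1 * b := crl_mul_le_mul_right ha b
    _ = b := one_mul b
    _ ≤ 1 := hb
  · intro a b c ha hb hc
    rw [le_inf_iff, CRL.resid]
    exact ⟨fun h => ⟨h, ha⟩, fun h => h.1⟩
end

section
/- Let A be a rigid bounded commutative integral residuated lattice. Then A has at most one congruence that is both proper and nontrivial; consequently the congruence lattice of A is either a two- or a three-element chain. -/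
/-- A congruence of a bounded commutative integral residuated lattice: an
equivalence relation compatible with all the operations. -/
def IsCongruence {α : Type*} [BCRL α] (r : α → α → Prop) : Prop :=
  Equivalence r ∧ ∀ a b c d : α, r a b → r c d →
    r (a ⊔ c) (b ⊔ d) ∧ r (a ⊓ c) (b ⊓ d) ∧ r (a * c) (b * d) ∧
      r (CRL.himp a c) (CRL.himp b d)

/-- A subalgebra of a BCRL: a subset containing `0` and `1` and closed under
all the operations. -/
def IsSubalgebra {α : Type*} [BCRL α] (S : Set α) : Prop :=
  (0 : α) ∈ S ∧ (1 : α) ∈ S ∧ ∀ a ∈ S, ∀ b ∈ S,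
    a ⊔ b ∈ S ∧ a ⊓ b ∈ S ∧ a * b ∈ S ∧ CRL.himp a b ∈ S

/-- A BCRL is rigid if `|A| > 2`, it is subdirectly irreducible, its only
subalgebras are `{0,1}` and `A`, and every proper nontrivial congruence has
exactly two equivalence classes. -/
def IsRigid (α : Type*) [BCRL α] : Prop :=
  (∃ a b c : α, a ≠ b ∧ a ≠ c ∧ b ≠ c) ∧
  (∃ μ : α → α → Prop, IsCongruence μ ∧ μ ≠ (· = ·) ∧
    ∀ θ : α → α → Prop, IsCongruence θ → θ ≠ (· = ·) → ∀ x y, μ x y → θ x y) ∧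
  (∀ S : Set α, IsSubalgebra S → S = {0, 1} ∨ S = Set.univ) ∧
  (∀ θ : α → α → Prop, IsCongruence θ → θ ≠ (· = ·) → θ ≠ (fun _ _ => True) →
    ∃ a b : α, ¬ θ a b ∧ ∀ x : α, θ x a ∨ θ x b)

lemma BCRL.mul_zero' {α : Type*} [BCRL α] (a : α) : a * 0 = 0 := by
  refine le_antisymm ?_ (BCRL.zero_le _)
  refine (CRL.resid a 0 0).mpr (le_trans (CIRL.le_one a) ((CRL.resid 1 0 0).mp ?_))
  rw [one_mul]

lemma cong_full_of_zero_one {α : Type*} [BCRL α] {θ : α → α → Prop}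
    (hθ : IsCongruence θ) (h01 : θ 0 1) : ∀ x y : α, θ x y := by
  have h0 : ∀ x : α, θ x 0 := by
    intro x
    have := (hθ.2 x x 1 0 (hθ.1.refl x) (hθ.1.symm h01)).2.2.1
    rwa [mul_one, BCRL.mul_zero'] at this
  exact fun x y => hθ.1.trans (h0 x) (hθ.1.symm (h0 y))

lemma exists_not_of_ne_full {α : Type*} [BCRL α] {θ : α → α → Prop}
    (h : θ ≠ (fun _ _ => True)) : ∃ x y : α, ¬ θ x y := by
  by_contra hc
  push_neg at hc
  exact h (funext fun x => funext fun y => eq_true (hc x y))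

lemma exists_pair_of_ne_id {α : Type*} [BCRL α] {θ : α → α → Prop}
    (hθ : IsCongruence θ) (h : θ ≠ (· = ·)) : ∃ x y : α, x ≠ y ∧ θ x y := by
  by_contra hc
  push_neg at hc
  apply h
  funext x y
  apply propext
  constructor
  · intro hxy
    by_contra hne
    exact hne (hc x y hne hxy).elim
  · rintro rfl; exact hθ.1.refl x

/-- For a proper nontrivial congruence with two classes, the classes are those
of 0 and 1, and membership in the class of 1 determines the congruence. -/
lemma two_classes_char {α : Type*} [BCRL α] {θ : α → α → Prop}
    (hθ : IsCongruence θ)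
    (htwo : ∃ a b : α, ¬ θ a b ∧ ∀ x : α, θ x a ∨ θ x b) :
    (¬ θ 0 1) ∧ (∀ x : α, θ x 0 ∨ θ x 1) := by
  obtain ⟨a, b, hab, hcl⟩ := htwo
  have h01 : ¬ θ 0 1 := by
    intro h01
    exact hab (cong_full_of_zero_one hθ h01 a b)
  refine ⟨h01, ?_⟩
  -- 0 is in class a or b; 1 in the other
  rcases hcl 0 with h0a | h0b
  · rcases hcl 1 with h1a | h1b
    · exact absurd (hθ.1.trans h0a (hθ.1.symm h1a)) h01
    · intro x
      rcases hcl x with hxa | hxb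
      · exact Or.inl (hθ.1.trans hxa (hθ.1.symm h0a))
      · exact Or.inr (hθ.1.trans hxb (hθ.1.symm h1b))
  · rcases hcl 1 with h1a | h1b
    · intro x
      rcases hcl x with hxa | hxb
      · exact Or.inr (hθ.1.trans hxa (hθ.1.symm h1a))
      · exact Or.inl (hθ.1.trans hxb (hθ.1.symm h0b))
    · exact absurd (hθ.1.trans h0b (hθ.1.symm h1b)) h01

lemma cong_iff_of_two {α : Type*} [BCRL α] {θ : α → α → Prop}
    (hθ : IsCongruence θ) (_h01 : ¬ θ 0 1) (hcl : ∀ x : α, θ x 0 ∨ θ x 1) :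
    ∀ x y : α, θ x y ↔ (θ x 1 ↔ θ y 1) := by
  intro x y
  constructor
  · intro hxy
    exact ⟨fun hx => hθ.1.trans (hθ.1.symm hxy) hx, fun hy => hθ.1.trans hxy hy⟩
  · intro hiff
    by_cases hx1 : θ x 1
    · exact hθ.1.trans hx1 (hθ.1.symm (hiff.mp hx1))
    · have hy1 : ¬ θ y 1 := fun hy => hx1 (hiff.mpr hy)
      have hx0 : θ x 0 := (hcl x).resolve_right hx1
      have hy0 : θ y 0 := (hcl y).resolve_right hy1
      exact hθ.1.trans hx0 (hθ.1.symm hy0)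

/-- a rigid BCRL has at most one congruence that is both proper
and nontrivial; consequently its congruences form a chain (so the congruence
lattice is a two- or three-element chain). -/
theorem rigid_congruence_lattice {α : Type*} [BCRL α] (h : IsRigid α) :
    (∀ θ θ' : α → α → Prop,
      IsCongruence θ → θ ≠ (· = ·) → θ ≠ (fun _ _ => True) →
      IsCongruence θ' → θ' ≠ (· = ·) → θ' ≠ (fun _ _ => True) →
      θ = θ') ∧
    (∀ θ θ' : α → α → Prop, IsCongruence θ → IsCongruence θ' →
      (∀ x y : α, θ x y → θ' x y) ∨ (∀ x y : α, θ' x y → θ x y)) := by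
  obtain ⟨-, ⟨μ, hμc, hμid, hμmin⟩, -, hrig4⟩ := h
  have key : ∀ θ θ' : α → α → Prop,
      IsCongruence θ → θ ≠ (· = ·) → θ ≠ (fun _ _ => True) →
      IsCongruence θ' → θ' ≠ (· = ·) → θ' ≠ (fun _ _ => True) → θ = θ' := by
    intro θ θ' hθ hθid hθfull hθ' hθ'id hθ'full
    set ρ : α → α → Prop := fun x y => θ x y ∧ θ' x y with hρdef
    have hρc : IsCongruence ρ := by
      constructor
      · exact ⟨fun x => ⟨hθ.1.refl x, hθ'.1.refl x⟩,
          fun h => ⟨hθ.1.symm h.1, hθ'.1.symm h.2⟩,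
          fun h h' => ⟨hθ.1.trans h.1 h'.1, hθ'.1.trans h.2 h'.2⟩⟩
      · intro a b c d hab hcd
        obtain ⟨h1, h2, h3, h4⟩ := hθ.2 a b c d hab.1 hcd.1
        obtain ⟨h1', h2', h3', h4'⟩ := hθ'.2 a b c d hab.2 hcd.2
        exact ⟨⟨h1, h1'⟩, ⟨h2, h2'⟩, ⟨h3, h3'⟩, ⟨h4, h4'⟩⟩
    have hρid : ρ ≠ (· = ·) := by
      obtain ⟨x, y, hxy, hμxy⟩ := exists_pair_of_ne_id hμc hμid
      intro hcon
      have : ρ x y := ⟨hμmin θ hθ hθid x y hμxy, hμmin θ' hθ' hθ'id x y hμxy⟩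
      rw [hcon] at this
      exact hxy this
    have hρfull : ρ ≠ (fun _ _ => True) := by
      obtain ⟨x, y, hxy⟩ := exists_not_of_ne_full hθfull
      intro hcon
      have : ρ x y := by rw [hcon]; trivial
      exact hxy this.1
    obtain ⟨hρ01, hρcl⟩ := two_classes_char hρc (hrig4 ρ hρc hρid hρfull)
    obtain ⟨hθ01, hθcl⟩ := two_classes_char hθ (hrig4 θ hθ hθid hθfull)
    obtain ⟨hθ'01, hθ'cl⟩ := two_classes_char hθ' (hrig4 θ' hθ' hθ'id hθ'full)
    -- the class of 1 is the same for θ, ρ, θ'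
    have hT : ∀ x : α, θ x 1 ↔ ρ x 1 := by
      intro x
      refine ⟨fun hx => ?_, fun hx => hx.1⟩
      rcases hρcl x with hx0 | hx1
      · exact absurd (hθ.1.trans (hθ.1.symm hx0.1) hx) hθ01
      · exact hx1
    have hT' : ∀ x : α, θ' x 1 ↔ ρ x 1 := by
      intro x
      refine ⟨fun hx => ?_, fun hx => hx.2⟩
      rcases hρcl x with hx0 | hx1
      · exact absurd (hθ'.1.trans (hθ'.1.symm hx0.2) hx) hθ'01
      · exact hx1
    funext x y
    apply propext
    rw [cong_iff_of_two hθ hθ01 hθcl, cong_iff_of_two hθ' hθ'01 hθ'cl,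
      hT, hT, hT', hT']
  refine ⟨key, ?_⟩
  intro θ θ' hθ hθ'
  by_cases hθid : θ = (· = ·)
  · left; intro x y hxy
    rw [hθid] at hxy
    exact hxy ▸ hθ'.1.refl x
  by_cases hθ'id : θ' = (· = ·)
  · right; intro x y hxy
    rw [hθ'id] at hxy
    exact hxy ▸ hθ.1.refl x
  by_cases hθfull : θ = (fun _ _ => True)
  · right; intro x y _; rw [hθfull]; trivial
  by_cases hθ'full : θ' = (fun _ _ => True)
  · left; intro x y _; rw [hθ'full]; trivial
  · left
    rw [key θ θ' hθ hθid hθfull hθ' hθ'id hθ'full]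
    exact fun x y h => h
end

section
/- Let A be a bounded commutative integral residuated lattice with |A| > 2 such that for every a ∈ A with a ≠ 0 and a ≠ 1, the smallest subset of A containing a and 1 and closed under ∨, ∧, · and → is all of A (i.e. the 0-free reduct of A is a tight algebra). Then A is rigid; in particular, the only subalgebras of A are {0,1} and A itself, and A has no congruence that is both proper and nontrivial (every nontrivial congruence of A is the full relation A × A). -/
section Aux
variable {α : Type*} [BCRL α]

lemma himp_self_eq_one' (b : α) : CRL.himp b b = 1 := by
  apply le_antisymm (CIRL.le_one _)
  exact (CRL.resid 1 b b).mp (by simp)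

lemma le_of_himp_eq_one' {a b : α} (h : CRL.himp a b = 1) : a ≤ b := by
  have := (CRL.resid 1 a b).mpr (h ▸ le_refl (1:α))
  simpa using this

lemma bcrl_mul_zero' (x : α) : x * (0:α) = 0 := by
  apply le_antisymm
  · exact (CRL.resid x 0 0).mpr (by rw [himp_self_eq_one']; exact CIRL.le_one x)
  · exact BCRL.zero_le _

end Aux


/-- if `A` is a BCRL with more than two elements such that every
`a ≠ 0, 1` generates (together with `1`, using `∨`, `∧`, `·`, `→` but not `0`)
all of `A` — i.e. the 0-free reduct of `A` is tight — then `A` is rigid; in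
particular its only subalgebras are `{0,1}` and `A`, and every nontrivial
congruence of `A` is the full relation. -/
theorem tight_reduct_is_rigid {α : Type*} [BCRL α]
    (hcard : ∃ a b c : α, a ≠ b ∧ a ≠ c ∧ b ≠ c)
    (hgen : ∀ a : α, a ≠ 0 → a ≠ 1 →
      ∀ S : Set α, a ∈ S → (1 : α) ∈ S →
        (∀ x ∈ S, ∀ y ∈ S, x ⊔ y ∈ S ∧ x ⊓ y ∈ S ∧ x * y ∈ S ∧ CRL.himp x y ∈ S) →
        S = Set.univ) :
    IsRigid α ∧
    (∀ S : Set α, IsSubalgebra S → S = {0, 1} ∨ S = Set.univ) ∧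
    (∀ θ : α → α → Prop, IsCongruence θ → θ ≠ (· = ·) → θ = fun _ _ => True) := by
  -- Subalgebra claim
  have hsub : ∀ S : Set α, IsSubalgebra S → S = {0, 1} ∨ S = Set.univ := by
    rintro S ⟨h0, h1, hcl⟩
    by_cases h : ∃ a ∈ S, a ≠ 0 ∧ a ≠ 1
    · obtain ⟨a, ha, ha0, ha1⟩ := h
      exact Or.inr (hgen a ha0 ha1 S ha h1 hcl)
    · push_neg at h
      left
      ext x
      constructor
      · intro hx
        by_cases hx0 : x = 0
        · exact Or.inl hx0
        · exact Or.inr (h x hx hx0)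
      · rintro (rfl | rfl)
        · exact h0
        · exact h1
  -- Every nontrivial congruence is full
  have hcong : ∀ θ : α → α → Prop, IsCongruence θ → θ ≠ (· = ·) → ∀ x y, θ x y := by
    rintro θ ⟨heq, hcomp⟩ hne
    have hab : ∃ a b : α, θ a b ∧ a ≠ b := by
      by_contra hc
      push_neg at hc
      apply hne
      funext a b
      exact propext ⟨fun h => hc a b h, fun h => h ▸ heq.refl a⟩
    obtain ⟨a, b, hab, hne'⟩ := hab
    have h1 : θ (CRL.himp a b) 1 := by
      have := (hcomp a b b b hab (heq.refl b)).2.2.2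
      rwa [himp_self_eq_one'] at this
    have h2 : θ (CRL.himp b a) 1 := by
      have := (hcomp b a a a (heq.symm hab) (heq.refl a)).2.2.2
      rwa [himp_self_eq_one'] at this
    have key : θ 0 1 := by
      have hex : ∃ e : α, θ e 1 ∧ e ≠ 1 := by
        by_cases hba : CRL.himp a b = 1
        · exact ⟨CRL.himp b a, h2, fun h =>
            hne' (le_antisymm (le_of_himp_eq_one' hba) (le_of_himp_eq_one' h))⟩
        · exact ⟨_, h1, hba⟩
      obtain ⟨e, he1, hen⟩ := hex
      by_cases he0 : e = 0
      · exact he0 ▸ he1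
      · have hS := hgen e he0 hen {x | θ x 1} he1 (heq.refl 1) ?_
        · have h0' : (0:α) ∈ {x : α | θ x 1} := by rw [hS]; trivial
          exact h0'
        · intro x hx y hy
          have hx' : θ x 1 := hx
          have hy' : θ y 1 := hy
          have H := hcomp x 1 y 1 hx' hy'
          refine ⟨?_, ?_, ?_, ?_⟩
          · show θ (x ⊔ y) 1; simpa using H.1
          · show θ (x ⊓ y) 1; simpa using H.2.1
          · show θ (x * y) 1; simpa using H.2.2.1
          · show θ (CRL.himp x y) 1
            have := H.2.2.2
            rwa [himp_self_eq_one'] at this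
    have h0x : ∀ x : α, θ 0 x := by
      intro x
      have := (hcomp x x 0 1 (heq.refl x) key).2.2.1
      rwa [bcrl_mul_zero', mul_one] at this
    intro x y
    exact heq.trans (heq.symm (h0x x)) (h0x y)
  have hfullcong : IsCongruence (fun _ _ : α => True) :=
    ⟨⟨fun _ => trivial, fun _ => trivial, fun _ _ => trivial⟩,
      fun _ _ _ _ _ _ => ⟨trivial, trivial, trivial, trivial⟩⟩
  have hfne : (fun _ _ : α => True) ≠ (· = ·) := by
    obtain ⟨a, b, _, hab, _, _⟩ := hcard
    intro h
    exact hab (of_eq_true (congrFun (congrFun h a) b).symm)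
  refine ⟨⟨hcard, ⟨fun _ _ => True, hfullcong, hfne,
      fun θ hθ hne x y _ => hcong θ hθ hne x y⟩, hsub, ?_⟩, hsub, ?_⟩
  · intro θ hθ hne hnf
    exact absurd (funext fun x => funext fun y => eq_true (hcong θ hθ hne x y)) hnf
  · intro θ hθ hne
    exact funext fun x => funext fun y => eq_true (hcong θ hθ hne x y)
end

section
/- Let A be an involutive bounded commutative integral residuated lattice (¬¬a = a for all a ∈ A, where ¬a := a → 0), and set a ⊕ b := ¬a → b. For every lattice filter F of A, the set K(A,F) = {(a,b) ∈ A × A : a ⊕ b ∈ F} is an admissible subalgebra of the twist-product K(A): it contains (1,1), (0,1) and (a,1) for every a ∈ A, and is closed under the operations ∨, ∧, · and → of K(A). Moreover, the map F ↦ K(A,F) is a bijection from the set of lattice filters of A onto the set of admissible subalgebras of K(A). -/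
/-- A lattice filter: a nonempty, upward-closed subset closed under meets. -/
def IsLatticeFilter {α : Type*} [BCRL α] (F : Set α) : Prop :=
  F.Nonempty ∧ (∀ a ∈ F, ∀ b : α, a ≤ b → b ∈ F) ∧ ∀ a ∈ F, ∀ b ∈ F, a ⊓ b ∈ F

/-- An admissible subalgebra of the twist-product `K(A)`: a subset containing
`(1,1)`, `(0,1)` and `(a,1)` for every `a`, closed under the twist operations. -/
def IsAdmissible {α : Type*} [BCRL α] (S : Set (α × α)) : Prop :=
  ((1 : α), (1 : α)) ∈ S ∧ ((0 : α), (1 : α)) ∈ S ∧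
  (∀ a : α, ((a, (1 : α)) : α × α) ∈ S) ∧
  ∀ x ∈ S, ∀ y ∈ S, Twist.kjoin x y ∈ S ∧ Twist.kmeet x y ∈ S ∧
    Twist.kmul x y ∈ S ∧ Twist.khimp x y ∈ S

/-- `K(A,F) = {(a,b) : a ⊕ b ∈ F}` where `a ⊕ b = ¬a → b`. -/
def KAF {α : Type*} [BCRL α] (F : Set α) : Set (α × α) :=
  {p : α × α | CRL.himp (CRL.himp p.1 0) p.2 ∈ F}

section Helpers
variable {α : Type*} [BCRL α]

local infixr:60 " ⇨ " => CRL.himp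

lemma bres {a b c : α} : a * b ≤ c ↔ a ≤ b ⇨ c := CRL.resid a b c

lemma bres' {a b c : α} : a * b ≤ c ↔ b ≤ a ⇨ c := by rw [mul_comm]; exact bres

lemma bhimp_mul_le {b c : α} : (b ⇨ c) * b ≤ c := bres.mpr le_rfl

lemma bmul_le_mul {a b c d : α} (h1 : a ≤ b) (h2 : c ≤ d) : a * c ≤ b * d := by
  have hbd : a * d ≤ b * d := bres.mpr (h1.trans (bres.mp le_rfl))
  have hac : a * c ≤ a * d := by
    rw [mul_comm a c, mul_comm a d]
    exact bres.mpr (h2.trans (bres.mp le_rfl))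
  exact hac.trans hbd

lemma bhimp_le_himp {a b c d : α} (h1 : b ≤ a) (h2 : c ≤ d) : (a ⇨ c) ≤ (b ⇨ d) :=
  bres.mp ((bmul_le_mul le_rfl h1).trans (bhimp_mul_le.trans h2))

lemma ble_one (a : α) : a ≤ 1 := CIRL.le_one a

lemma bzero_le (a : α) : (0 : α) ≤ a := BCRL.zero_le a

lemma bhimp_one (a : α) : (a ⇨ (1 : α)) = 1 :=
  le_antisymm (ble_one _) (bres.mp (ble_one _))

lemma bone_himp (a : α) : ((1 : α) ⇨ a) = a :=
  le_antisymm (by simpa using (bhimp_mul_le (b := (1 : α)) (c := a)))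
    (bres.mp (mul_one a).le)

lemma bzero_himp (a : α) : ((0 : α) ⇨ a) = 1 :=
  le_antisymm (ble_one _) (bres.mp (((one_mul (0 : α)).le).trans (bzero_le a)))

lemma bmul_himp_zero (a : α) : a * (a ⇨ (0 : α)) = 0 :=
  le_antisymm (by rw [mul_comm]; exact bhimp_mul_le) (bzero_le _)

lemma binf_one (x : α) : (1 : α) ⊓ x = x := inf_eq_right.mpr (ble_one x)

lemma binf_one' (x : α) : x ⊓ (1 : α) = x := inf_eq_left.mpr (ble_one x)

lemma bsup_zero (x : α) : (0 : α) ⊔ x = x := sup_eq_right.mpr (bzero_le x)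

lemma bzero_inf (x : α) : (0 : α) ⊓ x = 0 := inf_eq_left.mpr (bzero_le x)

lemma ble_himp_inf {x b c : α} : (x ⇨ b) ⊓ (x ⇨ c) ≤ x ⇨ (b ⊓ c) :=
  bres.mp (le_inf ((bmul_le_mul inf_le_left le_rfl).trans bhimp_mul_le)
    ((bmul_le_mul inf_le_right le_rfl).trans bhimp_mul_le))

lemma binf_le_sup_himp {x y c : α} : (x ⇨ c) ⊓ (y ⇨ c) ≤ (x ⊔ y) ⇨ c := by
  rw [← bres, bres']
  exact sup_le (bres'.mp ((bmul_le_mul inf_le_left le_rfl).trans bhimp_mul_le))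
    (bres'.mp ((bmul_le_mul inf_le_right le_rfl).trans bhimp_mul_le))

lemma bsup_himp (x y c : α) : ((x ⊔ y) ⇨ c) = (x ⇨ c) ⊓ (y ⇨ c) :=
  le_antisymm (le_inf (bhimp_le_himp le_sup_left le_rfl)
    (bhimp_le_himp le_sup_right le_rfl)) binf_le_sup_himp

lemma bcurry (a b c : α) : (a ⇨ (b ⇨ c)) = ((a * b) ⇨ c) := by
  apply le_antisymm
  · rw [← bres]
    calc (a ⇨ (b ⇨ c)) * (a * b) = ((a ⇨ (b ⇨ c)) * a) * b := (mul_assoc _ _ _).symm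
      _ ≤ (b ⇨ c) * b := bmul_le_mul bhimp_mul_le le_rfl
      _ ≤ c := bhimp_mul_le
  · rw [← bres, ← bres, mul_assoc]
    exact bhimp_mul_le

lemma bneg_himp (hinv : ∀ a : α, ((a ⇨ (0 : α)) ⇨ (0 : α)) = a) (a c : α) :
    ((a ⇨ c) ⇨ (0 : α)) = a * (c ⇨ 0) := by
  conv_lhs => rw [← hinv c]
  rw [bcurry, hinv]

lemma bdemorgan (hinv : ∀ a : α, ((a ⇨ (0 : α)) ⇨ (0 : α)) = a) (a b : α) :
    ((a ⊓ b) ⇨ (0 : α)) = (a ⇨ 0) ⊔ (b ⇨ 0) := by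
  have h : (((a ⇨ (0 : α)) ⊔ (b ⇨ 0)) ⇨ 0) = a ⊓ b := by
    rw [bsup_himp, hinv, hinv]
  rw [← h, hinv]

lemma bkey (hinv : ∀ a : α, ((a ⇨ (0 : α)) ⇨ (0 : α)) = a) (a b : α) :
    ((a ⇨ (0 : α)) ⇨ b) * (b ⇨ 0) ≤ a := by
  conv_rhs => rw [← hinv a]
  refine bres.mp ?_
  calc ((a ⇨ (0 : α)) ⇨ b) * (b ⇨ 0) * (a ⇨ 0)
      = ((a ⇨ (0 : α)) ⇨ b) * (a ⇨ 0) * (b ⇨ 0) := mul_right_comm _ _ _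
    _ ≤ b * (b ⇨ 0) := bmul_le_mul bhimp_mul_le le_rfl
    _ ≤ 0 := by rw [mul_comm]; exact bhimp_mul_le

end Helpers

local infixr:60 " ⇨ " => CRL.himp

/-- for an involutive BCRL `A`, `F ↦ K(A,F) = {(a,b) : a ⊕ b ∈ F}`
sends each lattice filter to an admissible subalgebra of the twist-product
`K(A)`, and this map is a bijection from the lattice filters of `A` onto the
admissible subalgebras of `K(A)`. -/
theorem involutive_filters_biject_admissible {α : Type*} [BCRL α]
    (hinv : ∀ a : α, CRL.himp (CRL.himp a 0) 0 = a) :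
    (∀ F : Set α, IsLatticeFilter F → IsAdmissible (KAF F)) ∧
    (∀ F G : Set α, IsLatticeFilter F → IsLatticeFilter G → KAF F = KAF G → F = G) ∧
    (∀ S : Set (α × α), IsAdmissible S →
      ∃ F : Set α, IsLatticeFilter F ∧ S = KAF F) := by
  refine ⟨?_, ?_, ?_⟩
  · -- Part 1: filters give admissible subalgebras
    rintro F ⟨⟨f, hf⟩, hup, hmeet⟩
    have h1F : (1 : α) ∈ F := hup f hf 1 (ble_one f)
    have hone : ∀ a : α, ((a, (1 : α)) : α × α) ∈ KAF F := by
      intro a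
      show ((a ⇨ (0 : α)) ⇨ (1 : α)) ∈ F
      rw [bhimp_one]; exact h1F
    refine ⟨hone 1, hone 0, hone, ?_⟩
    rintro ⟨a, b⟩ hx ⟨c, d⟩ hy
    have hx' : ((a ⇨ (0 : α)) ⇨ b) ∈ F := hx
    have hy' : ((c ⇨ (0 : α)) ⇨ d) ∈ F := hy
    have hxy := hmeet _ hx' _ hy'
    refine ⟨?_, ?_, ?_, ?_⟩
    · show (((a ⊔ c) ⇨ (0 : α)) ⇨ (b ⊓ d)) ∈ F
      refine hup _ hxy _ ?_
      have h1 : ((a ⇨ (0 : α)) ⇨ b) ≤ (((a ⊔ c) ⇨ (0 : α)) ⇨ b) :=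
        bhimp_le_himp (bhimp_le_himp le_sup_left le_rfl) le_rfl
      have h2 : ((c ⇨ (0 : α)) ⇨ d) ≤ (((a ⊔ c) ⇨ (0 : α)) ⇨ d) :=
        bhimp_le_himp (bhimp_le_himp le_sup_right le_rfl) le_rfl
      exact (inf_le_inf h1 h2).trans ble_himp_inf
    · show (((a ⊓ c) ⇨ (0 : α)) ⇨ (b ⊔ d)) ∈ F
      refine hup _ hxy _ ?_
      rw [bdemorgan hinv]
      calc ((a ⇨ (0 : α)) ⇨ b) ⊓ ((c ⇨ (0 : α)) ⇨ d)
          ≤ ((a ⇨ (0 : α)) ⇨ (b ⊔ d)) ⊓ ((c ⇨ (0 : α)) ⇨ (b ⊔ d)) :=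
            inf_le_inf (bhimp_le_himp le_rfl le_sup_left)
              (bhimp_le_himp le_rfl le_sup_right)
        _ ≤ _ := binf_le_sup_himp
    · show (((a * c) ⇨ (0 : α)) ⇨ ((a ⇨ d) ⊓ (c ⇨ b))) ∈ F
      refine hup _ hxy _ ?_
      have key1 : ((c ⇨ (0 : α)) ⇨ d) ≤ (((a * c) ⇨ (0 : α)) ⇨ (a ⇨ d)) := by
        rw [← bres, ← bres]
        have h0 : ((a * c) ⇨ (0 : α)) * a ≤ (c ⇨ (0 : α)) := by
          rw [← bres, mul_assoc]; exact bhimp_mul_le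
        calc ((c ⇨ (0 : α)) ⇨ d) * (((a * c) ⇨ (0 : α))) * a
            = ((c ⇨ (0 : α)) ⇨ d) * (((a * c) ⇨ (0 : α)) * a) := mul_assoc _ _ _
          _ ≤ ((c ⇨ (0 : α)) ⇨ d) * (c ⇨ (0 : α)) := bmul_le_mul le_rfl h0
          _ ≤ d := bhimp_mul_le
      have key2 : ((a ⇨ (0 : α)) ⇨ b) ≤ (((a * c) ⇨ (0 : α)) ⇨ (c ⇨ b)) := by
        rw [← bres, ← bres]
        have h0 : ((a * c) ⇨ (0 : α)) * c ≤ (a ⇨ (0 : α)) := by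
          rw [← bres, mul_assoc, mul_comm c a]; exact bhimp_mul_le
        calc ((a ⇨ (0 : α)) ⇨ b) * (((a * c) ⇨ (0 : α))) * c
            = ((a ⇨ (0 : α)) ⇨ b) * (((a * c) ⇨ (0 : α)) * c) := mul_assoc _ _ _
          _ ≤ ((a ⇨ (0 : α)) ⇨ b) * (a ⇨ (0 : α)) := bmul_le_mul le_rfl h0
          _ ≤ b := bhimp_mul_le
      exact le_trans (le_inf (inf_le_right.trans key1) (inf_le_left.trans key2))
        ble_himp_inf
    · show ((((a ⇨ c) ⊓ (d ⇨ b)) ⇨ (0 : α)) ⇨ (a * d)) ∈ F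
      refine hup _ hxy _ ?_
      rw [bdemorgan hinv, bneg_himp hinv a c, bneg_himp hinv d b]
      have key1 : ((c ⇨ (0 : α)) ⇨ d) ≤ ((a * (c ⇨ (0 : α))) ⇨ (a * d)) := by
        rw [← bres]
        calc ((c ⇨ (0 : α)) ⇨ d) * (a * (c ⇨ (0 : α)))
            = a * (((c ⇨ (0 : α)) ⇨ d) * (c ⇨ (0 : α))) := mul_left_comm _ _ _
          _ ≤ a * d := bmul_le_mul le_rfl bhimp_mul_le
      have key2 : ((a ⇨ (0 : α)) ⇨ b) ≤ ((d * (b ⇨ (0 : α))) ⇨ (a * d)) := by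
        rw [← bres]
        calc ((a ⇨ (0 : α)) ⇨ b) * (d * (b ⇨ (0 : α)))
            = ((a ⇨ (0 : α)) ⇨ b) * ((b ⇨ (0 : α)) * d) := by rw [mul_comm d]
          _ = (((a ⇨ (0 : α)) ⇨ b) * (b ⇨ (0 : α))) * d := (mul_assoc _ _ _).symm
          _ ≤ a * d := bmul_le_mul (bkey hinv a b) le_rfl
      exact le_trans (le_inf (inf_le_right.trans key1) (inf_le_left.trans key2))
        binf_le_sup_himp
  · -- Part 2: injectivity
    intro F G _ _ h
    ext a
    have hmem : ∀ H : Set α, a ∈ H ↔ ((a, (0 : α)) : α × α) ∈ KAF H := by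
      intro H
      show a ∈ H ↔ ((a ⇨ (0 : α)) ⇨ (0 : α)) ∈ H
      rw [hinv]
    rw [hmem F, hmem G, h]
  · -- Part 3: surjectivity
    rintro S ⟨h11, h01, hdiag, hops⟩
    -- From (a,b) ∈ S we get (0, ¬a → b) ∈ S
    have L1 : ∀ a b : α, ((a, b) : α × α) ∈ S →
        (((0 : α), (a ⇨ (0 : α)) ⇨ b) : α × α) ∈ S := by
      intro a b hab
      have e1 : Twist.kmul ((a, b) : α × α) ((a ⇨ (0 : α)), 1)
          = (((0 : α), (a ⇨ (0 : α)) ⇨ b) : α × α) := by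
        simp [Twist.kmul, bmul_himp_zero, bhimp_one, binf_one]
      have := (hops _ hab _ (hdiag (a ⇨ (0 : α)))).2.2.1
      rwa [e1] at this
    -- From (0,x) ∈ S we get (x,0) ∈ S
    have L2 : ∀ x : α, (((0 : α), x) : α × α) ∈ S → ((x, (0 : α)) : α × α) ∈ S := by
      intro x hx
      have e2 : Twist.khimp (((0 : α), x) : α × α) (((0 : α), 1) : α × α)
          = ((x, (0 : α)) : α × α) := by
        simp [Twist.khimp, bzero_himp, bone_himp, binf_one]
      have := (hops _ hx _ h01).2.2.2
      rwa [e2] at this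
    set F : Set α := {x | ((x, (0 : α)) : α × α) ∈ S} with hFdef
    have hfwd : ∀ a b : α, ((a, b) : α × α) ∈ S → ((a ⇨ (0 : α)) ⇨ b) ∈ F := by
      intro a b hab
      exact L2 _ (L1 a b hab)
    have hbwd : ∀ a b : α, ((a ⇨ (0 : α)) ⇨ b) ∈ F → ((a, b) : α × α) ∈ S := by
      intro a b hab
      have hab' : ((((a ⇨ (0 : α)) ⇨ b), (0 : α)) : α × α) ∈ S := hab
      have e3 : Twist.kmul ((((a ⇨ (0 : α)) ⇨ b), (0 : α)) : α × α) ((b ⇨ (0 : α)), 1)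
          = (((((a ⇨ (0 : α)) ⇨ b)) * (b ⇨ (0 : α)), b) : α × α) := by
        simp [Twist.kmul, bhimp_one, binf_one, hinv]
      have s1 := (hops _ hab' _ (hdiag (b ⇨ (0 : α)))).2.2.1
      rw [e3] at s1
      have e4 : Twist.kjoin ((a, (1 : α)) : α × α)
          (((((a ⇨ (0 : α)) ⇨ b)) * (b ⇨ (0 : α)), b) : α × α) = ((a, b) : α × α) := by
        simp [Twist.kjoin, binf_one, sup_eq_left.mpr (bkey hinv a b)]
      have s2 := (hops _ (hdiag a) _ s1).1
      rwa [e4] at s2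
    have h1F : (1 : α) ∈ F := by
      have := hfwd 1 1 h11
      rwa [bhimp_one] at this
    refine ⟨F, ⟨⟨1, h1F⟩, ?_, ?_⟩, ?_⟩
    · intro x hx y hxy
      have e5 : Twist.kjoin ((x, (0 : α)) : α × α) ((y, (1 : α)) : α × α)
          = ((y, (0 : α)) : α × α) := by
        simp [Twist.kjoin, sup_eq_right.mpr hxy, bzero_inf]
      have := (hops _ hx _ (hdiag y)).1
      rwa [e5] at this
    · intro x hx y hy
      have e6 : Twist.kmeet ((x, (0 : α)) : α × α) ((y, (0 : α)) : α × α)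
          = ((x ⊓ y, (0 : α)) : α × α) := by
        simp [Twist.kmeet]
      have := (hops _ hx _ hy).2.1
      rwa [e6] at this
    · ext ⟨a, b⟩
      constructor
      · intro h
        exact hfwd a b h
      · intro h
        exact hbwd a b h
end

section
/- Let H be a Heyting algebra and F a regular filter of H (a lattice filter containing every dense element). Then K(H,F) = {(a,b) ∈ H × H : a ⊔ b ∈ F} is an admissible subalgebra of the twist-product K(H): it contains (⊤,⊤), (⊥,⊤) and (a,⊤) for every a ∈ H, and is closed under the operations of K(H); moreover the set of elements of K(H,F) below (⊤,⊤) is exactly {(a,⊤) : a ∈ H}, which is isomorphic to H via a ↦ (a,⊤). Furthermore, the map F ↦ K(H,F) is a bijection from the set of regular filters of H onto the set of admissible subalgebras of K(H). -/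
namespace HeytTwist
variable {α : Type*} [HeytingAlgebra α]

/-- The twist-product order. -/
def kle (x y : α × α) : Prop := x.1 ≤ y.1 ∧ y.2 ≤ x.2

/-- Join of the twist-product of a Heyting algebra. -/
def kjoin (x y : α × α) : α × α := (x.1 ⊔ y.1, x.2 ⊓ y.2)

/-- Meet of the twist-product of a Heyting algebra. -/
def kmeet (x y : α × α) : α × α := (x.1 ⊓ y.1, x.2 ⊔ y.2)

/-- Product of the twist-product of a Heyting algebra (the monoid operation of
the Heyting algebra is `⊓`). -/
def kmul (x y : α × α) : α × α := (x.1 ⊓ y.1, (x.1 ⇨ y.2) ⊓ (y.1 ⇨ x.2))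

/-- Implication of the twist-product of a Heyting algebra. -/
def khimp (x y : α × α) : α × α := ((x.1 ⇨ y.1) ⊓ (y.2 ⇨ x.2), x.1 ⊓ y.2)

end HeytTwist

/-- A lattice filter of a Heyting algebra. -/
def HIsLatticeFilter {α : Type*} [HeytingAlgebra α] (F : Set α) : Prop :=
  F.Nonempty ∧ (∀ a ∈ F, ∀ b : α, a ≤ b → b ∈ F) ∧ ∀ a ∈ F, ∀ b ∈ F, a ⊓ b ∈ F

/-- A regular filter: a lattice filter containing every dense element. -/
def HIsRegularFilter {α : Type*} [HeytingAlgebra α] (F : Set α) : Prop :=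
  HIsLatticeFilter F ∧ ∀ a : α, aᶜ = ⊥ → a ∈ F

/-- An admissible subalgebra of the twist-product `K(H)`. -/
def HIsAdmissible {α : Type*} [HeytingAlgebra α] (S : Set (α × α)) : Prop :=
  ((⊤ : α), (⊤ : α)) ∈ S ∧ ((⊥ : α), (⊤ : α)) ∈ S ∧
  (∀ a : α, ((a, (⊤ : α)) : α × α) ∈ S) ∧
  ∀ x ∈ S, ∀ y ∈ S, HeytTwist.kjoin x y ∈ S ∧ HeytTwist.kmeet x y ∈ S ∧
    HeytTwist.kmul x y ∈ S ∧ HeytTwist.khimp x y ∈ S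

/-- `K(H,F) = {(a,b) : a ⊔ b ∈ F}`. -/
def KHF {α : Type*} [HeytingAlgebra α] (F : Set α) : Set (α × α) :=
  {p : α × α | p.1 ⊔ p.2 ∈ F}

section Aux
variable {α : Type*} [HeytingAlgebra α]

lemma hk_compl_le_himp (a b : α) : aᶜ ≤ a ⇨ b := by
  rw [le_himp_iff]; simp

lemma hk_sup_inf_sup_le {u v w z t : α} (h1 : u ⊓ w ≤ t) (h2 : u ⊓ z ≤ t)
    (h3 : v ⊓ w ≤ t) (h4 : v ⊓ z ≤ t) : (u ⊔ v) ⊓ (w ⊔ z) ≤ t := by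
  rw [inf_sup_right]
  apply sup_le <;> rw [inf_sup_left] <;> exact sup_le (by assumption) (by assumption)

lemma hk_rearrange (a b c d e f : α) :
    ((a ⊔ b) ⊓ (c ⊔ d)) ⊓ ((a ⊔ e) ⊓ (c ⊔ f)) = (a ⊔ b ⊓ e) ⊓ (c ⊔ d ⊓ f) := by
  rw [inf_inf_inf_comm, sup_inf_left, sup_inf_left]

lemma hk_dense_sup_compl (a : α) : (a ⊔ aᶜ)ᶜ = ⊥ := by
  rw [compl_sup]; simp

lemma hk_himp_inf_sup (a b : α) : (a ⇨ b) ⊓ (a ⊔ b) = b := by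
  apply le_antisymm
  · rw [inf_sup_left]
    exact sup_le (by rw [himp_inf_self]; exact inf_le_left) inf_le_right
  · exact le_inf le_himp le_sup_right

namespace HRF

lemma up {F : Set α} (hF : HIsRegularFilter F) {a b : α} (ha : a ∈ F) (h : a ≤ b) :
    b ∈ F := hF.1.2.1 a ha b h

lemma inf {F : Set α} (hF : HIsRegularFilter F) {a b : α} (ha : a ∈ F) (hb : b ∈ F) :
    a ⊓ b ∈ F := hF.1.2.2 a ha b hb

lemma top {F : Set α} (hF : HIsRegularFilter F) : ⊤ ∈ F := by
  obtain ⟨a, ha⟩ := hF.1.1; exact up hF ha le_top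

lemma dense {F : Set α} (hF : HIsRegularFilter F) (a : α) : a ⊔ aᶜ ∈ F :=
  hF.2 _ (hk_dense_sup_compl a)

end HRF
end Aux

open HeytTwist in
/-- for a Heyting algebra `H` and a regular filter `F`,
`K(H,F) = {(a,b) : a ⊔ b ∈ F}` is an admissible subalgebra of the
twist-product `K(H)`; its elements below `(⊤,⊤)` are exactly the pairs
`(a,⊤)`, and `a ↦ (a,⊤)` is an isomorphism of `H` onto this negative cone.
Moreover `F ↦ K(H,F)` is a bijection from the regular filters of `H` onto the
admissible subalgebras of `K(H)`. -/
theorem heyting_regular_filters_biject_admissible {α : Type*} [HeytingAlgebra α] :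
    (∀ F : Set α, HIsRegularFilter F → HIsAdmissible (KHF F)) ∧
    (∀ F : Set α, HIsRegularFilter F →
      {x ∈ KHF F | kle x ((⊤ : α), (⊤ : α))} = {p : α × α | ∃ a : α, p = (a, ⊤)} ∧
      Function.Injective (fun a : α => ((a, (⊤ : α)) : α × α)) ∧
      (∀ a b : α,
        kjoin ((a, (⊤ : α)) : α × α) ((b, (⊤ : α)) : α × α) = ((a ⊔ b, (⊤ : α)) : α × α) ∧
        kmeet ((a, (⊤ : α)) : α × α) ((b, (⊤ : α)) : α × α) = ((a ⊓ b, (⊤ : α)) : α × α) ∧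
        kmul ((a, (⊤ : α)) : α × α) ((b, (⊤ : α)) : α × α) = ((a ⊓ b, (⊤ : α)) : α × α) ∧
        kmeet (khimp ((a, (⊤ : α)) : α × α) ((b, (⊤ : α)) : α × α)) ((⊤ : α), (⊤ : α)) =
          ((a ⇨ b, (⊤ : α)) : α × α))) ∧
    (∀ F G : Set α, HIsRegularFilter F → HIsRegularFilter G → KHF F = KHF G → F = G) ∧
    (∀ S : Set (α × α), HIsAdmissible S →
      ∃ F : Set α, HIsRegularFilter F ∧ S = KHF F) := by
  refine ⟨?_, ?_, ?_, ?_⟩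
  · -- Part A : KHF F is admissible
    intro F hF
    refine ⟨by show (⊤:α) ⊔ ⊤ ∈ F; simpa using HRF.top hF,
            by show (⊥:α) ⊔ ⊤ ∈ F; simpa using HRF.top hF,
            fun a => by show a ⊔ (⊤:α) ∈ F; simpa using HRF.top hF, ?_⟩
    rintro ⟨a, b⟩ hx ⟨c, d⟩ hy
    have hx' : a ⊔ b ∈ F := hx
    have hy' : c ⊔ d ∈ F := hy
    have hxy : (a ⊔ b) ⊓ (c ⊔ d) ∈ F := HRF.inf hF hx' hy'
    refine ⟨?_, ?_, ?_, ?_⟩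
    · show (a ⊔ c) ⊔ (b ⊓ d) ∈ F
      refine HRF.up hF hxy (hk_sup_inf_sup_le ?_ ?_ ?_ ?_)
      · exact inf_le_left.trans (le_sup_left.trans le_sup_left)
      · exact inf_le_left.trans (le_sup_left.trans le_sup_left)
      · exact inf_le_right.trans (le_sup_right.trans le_sup_left)
      · exact le_sup_right
    · show (a ⊓ c) ⊔ (b ⊔ d) ∈ F
      refine HRF.up hF hxy (hk_sup_inf_sup_le ?_ ?_ ?_ ?_)
      · exact le_sup_left
      · exact inf_le_right.trans (le_sup_right.trans le_sup_right)
      · exact inf_le_left.trans (le_sup_left.trans le_sup_right)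
      · exact inf_le_left.trans (le_sup_left.trans le_sup_right)
    · show (a ⊓ c) ⊔ ((a ⇨ d) ⊓ (c ⇨ b)) ∈ F
      have hm : ((a ⊔ b) ⊓ (c ⊔ d)) ⊓ ((a ⊔ aᶜ) ⊓ (c ⊔ cᶜ)) ∈ F :=
        HRF.inf hF hxy (HRF.inf hF (HRF.dense hF a) (HRF.dense hF c))
      rw [hk_rearrange] at hm
      refine HRF.up hF hm (hk_sup_inf_sup_le le_sup_left ?_ ?_ ?_)
      · refine (le_inf ?_ ?_).trans le_sup_right
        · exact (inf_le_right.trans inf_le_left).trans le_himp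
        · exact (inf_le_right.trans inf_le_right).trans (hk_compl_le_himp c b)
      · refine (le_inf ?_ ?_).trans le_sup_right
        · exact (inf_le_left.trans inf_le_right).trans (hk_compl_le_himp a d)
        · exact (inf_le_left.trans inf_le_left).trans le_himp
      · refine (le_inf ?_ ?_).trans le_sup_right
        · exact (inf_le_left.trans inf_le_right).trans (hk_compl_le_himp a d)
        · exact (inf_le_left.trans inf_le_left).trans le_himp
    · show ((a ⇨ c) ⊓ (d ⇨ b)) ⊔ (a ⊓ d) ∈ F
      have hyd : d ⊔ c ∈ F := HRF.up hF hy' (le_of_eq (sup_comm c d))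
      have hm : ((a ⊔ b) ⊓ (d ⊔ c)) ⊓ ((a ⊔ aᶜ) ⊓ (d ⊔ dᶜ)) ∈ F :=
        HRF.inf hF (HRF.inf hF hx' hyd) (HRF.inf hF (HRF.dense hF a) (HRF.dense hF d))
      rw [hk_rearrange] at hm
      refine HRF.up hF hm (hk_sup_inf_sup_le le_sup_right ?_ ?_ ?_)
      · refine (le_inf ?_ ?_).trans le_sup_left
        · exact (inf_le_right.trans inf_le_left).trans le_himp
        · exact (inf_le_right.trans inf_le_right).trans (hk_compl_le_himp d b)
      · refine (le_inf ?_ ?_).trans le_sup_left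
        · exact (inf_le_left.trans inf_le_right).trans (hk_compl_le_himp a c)
        · exact (inf_le_left.trans inf_le_left).trans le_himp
      · refine (le_inf ?_ ?_).trans le_sup_left
        · exact (inf_le_left.trans inf_le_right).trans (hk_compl_le_himp a c)
        · exact (inf_le_left.trans inf_le_left).trans le_himp
  · -- Part B : the negative cone
    intro F hF
    refine ⟨?_, ?_, ?_⟩
    · ext p
      constructor
      · rintro ⟨-, hk⟩
        exact ⟨p.1, Prod.ext rfl (top_le_iff.mp hk.2)⟩
      · rintro ⟨c, rfl⟩
        exact ⟨by show c ⊔ (⊤:α) ∈ F; simpa using HRF.top hF, le_top, le_rfl⟩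
    · exact fun a b h => by simpa using congrArg Prod.fst h
    · refine fun a b => ⟨?_, ?_, ?_, ?_⟩ <;>
        simp [kjoin, kmeet, kmul, khimp]
  · -- Part C : injectivity of KHF
    intro F G hF hG h
    ext a
    have := Set.ext_iff.mp h (a, ⊥)
    simpa [KHF] using this
  · -- Part D : surjectivity of KHF
    intro S hS
    obtain ⟨htop, hbot, hneg, hcl⟩ := hS
    have hTS : ∀ c : α, ((⊤ : α), c) ∈ S := by
      intro c
      have h := (hcl _ (hneg c) _ htop).2.2.2
      simpa [khimp] using h
    have hnorm : ∀ a b : α, ((a, b) : α × α) ∈ S → ((a ⊔ b, a ⊔ b) : α × α) ∈ S := by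
      intro a b hab
      have h1 := (hcl _ hab _ (hneg (a ⊔ b))).1
      have h1' : ((a ⊔ b, b) : α × α) ∈ S := by
        simpa [kjoin, ← sup_assoc] using h1
      have h2 := (hcl _ h1' _ (hTS (a ⊔ b))).2.1
      have e : b ⊔ (a ⊔ b) = a ⊔ b := by
        rw [sup_comm b (a ⊔ b), sup_assoc, sup_idem]
      simpa [kmeet, e] using h2
    have hbotSnd : ∀ c : α, ((c, c) : α × α) ∈ S → ((⊥ : α), c) ∈ S := by
      intro c hc
      have h := (hcl _ hc _ hbot).2.2.2
      simpa [khimp] using h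
    refine ⟨{c : α | ((c, c) : α × α) ∈ S}, ⟨⟨⟨⊤, htop⟩, ?_, ?_⟩, ?_⟩, ?_⟩
    · -- upward closed
      intro s hs t hst
      have h := (hcl _ hs _ (hneg t)).1
      have h' : ((t, s) : α × α) ∈ S := by
        simpa [kjoin, sup_eq_right.mpr hst] using h
      have := hnorm t s h'
      simpa [sup_eq_left.mpr hst] using this
    · -- closed under meet
      intro s hs t ht
      have h := (hcl _ (hbotSnd s hs) _ (hbotSnd t ht)).1
      have h' : ((⊥ : α), s ⊓ t) ∈ S := by simpa [kjoin] using h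
      have := hnorm ⊥ (s ⊓ t) h'
      simpa using this
    · -- contains dense elements
      intro c hc
      have h := (hcl _ (hneg c) _ hbot).2.2.2
      have h' : ((⊥ : α), c) ∈ S := by simpa [khimp, hc] using h
      have := hnorm ⊥ c h'
      simpa using this
    · -- S = KHF F
      ext ⟨a, b⟩
      simp only [KHF, Set.mem_setOf_eq]
      constructor
      · intro h
        exact hnorm a b h
      · intro h
        have hm := (hcl _ (hneg a) _ (hTS b)).2.2.1
        have h1 : ((a, a ⇨ b) : α × α) ∈ S := by simpa [kmul] using hm
        have h2 := hbotSnd _ h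
        have h3 := (hcl _ h1 _ h2).1
        simpa [kjoin, hk_himp_inf_sup] using h3
end

section
/- Let A be a Stonean residuated lattice. Then for all x, y ∈ A: (i) x ∧ ¬x = 0 (A is pseudocomplemented); (ii) ¬(x ∧ y) = ¬x ∨ ¬y; (iii) every element of the form ¬x is complemented, i.e. ¬x ∨ ¬¬x = 1 and ¬x ∧ ¬¬x = 0; and (iv) x = ¬¬x ∧ (¬x ∨ x). -/
/-- A Stonean residuated lattice: a BCRL satisfying `¬x ∨ ¬¬x = 1`. -/
class StoneanRL (α : Type*) extends BCRL α where
  stone : ∀ x : α, himp x 0 ⊔ himp (himp x 0) 0 = 1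

namespace CRLaux

variable {α : Type*}

section crl
variable [CRL α]

lemma mul_le_mul_left'' {b c : α} (hbc : b ≤ c) (a : α) : a * b ≤ a * c := by
  have h1 : c * a ≤ a * c := by rw [mul_comm]
  have h2 : c ≤ CRL.himp a (a * c) := (CRL.resid c a (a * c)).mp h1
  have h3 : b ≤ CRL.himp a (a * c) := le_trans hbc h2
  have h4 : b * a ≤ a * c := (CRL.resid b a (a * c)).mpr h3
  rwa [mul_comm] at h4

lemma mul_le_mul'' {a b c d : α} (hab : a ≤ b) (hcd : c ≤ d) : a * c ≤ b * d := by
  calc a * c ≤ a * d := mul_le_mul_left'' hcd a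
    _ = d * a := mul_comm _ _
    _ ≤ d * b := mul_le_mul_left'' hab d
    _ = b * d := mul_comm _ _

lemma crl_mul_sup (a b c : α) : a * (b ⊔ c) = a * b ⊔ a * c := by
  apply le_antisymm
  · rw [mul_comm, CRL.resid]
    exact sup_le ((CRL.resid b a _).mp (by rw [mul_comm]; exact le_sup_left))
      ((CRL.resid c a _).mp (by rw [mul_comm]; exact le_sup_right))
  · exact sup_le (mul_le_mul_left'' le_sup_left a) (mul_le_mul_left'' le_sup_right a)

end crl

section bcrl
variable [BCRL α]

local notation "neg" => fun a : α => CRL.himp a 0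

lemma mul_le_left (a b : α) : a * b ≤ a := by
  have := mul_le_mul_left'' (CIRL.le_one b) a
  rwa [mul_one] at this

lemma mul_le_right (a b : α) : a * b ≤ b := by rw [mul_comm]; exact mul_le_left b a

lemma mul_neg_le (a : α) : a * CRL.himp a 0 ≤ 0 := by
  rw [mul_comm]
  exact (CRL.resid _ a 0).mpr le_rfl

lemma neg_antitone {a b : α} (hab : a ≤ b) : CRL.himp b 0 ≤ CRL.himp a 0 := by
  rw [← CRL.resid]
  calc CRL.himp b 0 * a ≤ CRL.himp b 0 * b := mul_le_mul_left'' hab _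
    _ = b * CRL.himp b 0 := mul_comm _ _
    _ ≤ 0 := mul_neg_le b

lemma le_negneg (a : α) : a ≤ CRL.himp (CRL.himp a 0) 0 :=
  (CRL.resid a _ 0).mp (mul_neg_le a)

lemma negnegneg (a : α) : CRL.himp (CRL.himp (CRL.himp a 0) 0) 0 ≤ CRL.himp a 0 :=
  neg_antitone (le_negneg a)

/-- `¬¬x * ¬¬y * ¬(x*y) ≤ 0`. -/
lemma negneg_mul (x y : α) :
    CRL.himp (CRL.himp x 0) 0 * CRL.himp (CRL.himp y 0) 0 * CRL.himp (x * y) 0 ≤ 0 := by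
  set n := CRL.himp (x * y) 0 with hn
  -- x * (y * n) ≤ 0
  have h1 : x * (y * n) ≤ 0 := by
    rw [← mul_assoc]
    exact mul_neg_le (x * y)
  have h2 : x ≤ CRL.himp (y * n) 0 := (CRL.resid x (y * n) 0).mp h1
  have h3 : CRL.himp (CRL.himp x 0) 0 ≤ CRL.himp (y * n) 0 := by
    calc CRL.himp (CRL.himp x 0) 0
        ≤ CRL.himp (CRL.himp (CRL.himp (y*n) 0) 0) 0 := neg_antitone (neg_antitone h2)
      _ ≤ CRL.himp (y * n) 0 := negnegneg _
  have h4 : CRL.himp (CRL.himp x 0) 0 * (y * n) ≤ 0 := (CRL.resid _ (y*n) 0).mpr h3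
  have h5 : y * (CRL.himp (CRL.himp x 0) 0 * n) ≤ 0 := by
    calc y * (CRL.himp (CRL.himp x 0) 0 * n)
        = CRL.himp (CRL.himp x 0) 0 * (y * n) := by
          rw [← mul_assoc, ← mul_assoc, mul_comm y]
      _ ≤ 0 := h4
  have h6 : y ≤ CRL.himp (CRL.himp (CRL.himp x 0) 0 * n) 0 :=
    (CRL.resid _ _ 0).mp h5
  have h7 : CRL.himp (CRL.himp y 0) 0 ≤ CRL.himp (CRL.himp (CRL.himp x 0) 0 * n) 0 := by
    calc CRL.himp (CRL.himp y 0) 0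
        ≤ CRL.himp (CRL.himp (CRL.himp (CRL.himp (CRL.himp x 0) 0 * n) 0) 0) 0 :=
          neg_antitone (neg_antitone h6)
      _ ≤ _ := negnegneg _
  have h8 : CRL.himp (CRL.himp y 0) 0 * (CRL.himp (CRL.himp x 0) 0 * n) ≤ 0 :=
    (CRL.resid _ _ 0).mpr h7
  calc CRL.himp (CRL.himp x 0) 0 * CRL.himp (CRL.himp y 0) 0 * n
      = CRL.himp (CRL.himp y 0) 0 * (CRL.himp (CRL.himp x 0) 0 * n) := by
        rw [← mul_assoc, mul_comm (CRL.himp (CRL.himp x 0) 0)]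
    _ ≤ 0 := h8

end bcrl

end CRLaux

open CRLaux in
/-- in a Stonean residuated lattice, with `¬x := x → 0`:
(i) `x ∧ ¬x = 0`; (ii) `¬(x ∧ y) = ¬x ∨ ¬y`; (iii) every `¬x` is complemented
(`¬x ∨ ¬¬x = 1` and `¬x ∧ ¬¬x = 0`); (iv) `x = ¬¬x ∧ (¬x ∨ x)`. -/
theorem stonean_basic_properties {α : Type*} [StoneanRL α] (x y : α) :
    x ⊓ CRL.himp x 0 = 0 ∧
    CRL.himp (x ⊓ y) 0 = CRL.himp x 0 ⊔ CRL.himp y 0 ∧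
    (CRL.himp x 0 ⊔ CRL.himp (CRL.himp x 0) 0 = 1 ∧
      CRL.himp x 0 ⊓ CRL.himp (CRL.himp x 0) 0 = 0) ∧
    x = CRL.himp (CRL.himp x 0) 0 ⊓ (CRL.himp x 0 ⊔ x) := by
  have zle : ∀ a : α, (0:α) ≤ a := BCRL.zero_le
  -- (i), in general form
  have part1 : ∀ z : α, z ⊓ CRL.himp z 0 = 0 := by
    intro z
    apply le_antisymm _ (zle _)
    have : z ⊓ CRL.himp z 0 = (z ⊓ CRL.himp z 0) * (CRL.himp z 0 ⊔ CRL.himp (CRL.himp z 0) 0) := by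
      rw [StoneanRL.stone z, mul_one]
    rw [this, crl_mul_sup]
    apply sup_le
    · calc (z ⊓ CRL.himp z 0) * CRL.himp z 0 ≤ z * CRL.himp z 0 :=
            mul_le_mul'' inf_le_left le_rfl
        _ ≤ 0 := mul_neg_le z
    · calc (z ⊓ CRL.himp z 0) * CRL.himp (CRL.himp z 0) 0
          ≤ CRL.himp z 0 * CRL.himp (CRL.himp z 0) 0 := mul_le_mul'' inf_le_right le_rfl
        _ ≤ 0 := mul_neg_le _
  refine ⟨part1 x, ?_, ⟨StoneanRL.stone x, part1 _⟩, ?_⟩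
  · -- (ii)
    apply le_antisymm
    · set n := CRL.himp (x ⊓ y) 0 with hn
      have key : n * (CRL.himp (CRL.himp x 0) 0 * CRL.himp (CRL.himp y 0) 0) ≤ 0 := by
        have h1 : x * y ≤ x ⊓ y := le_inf (mul_le_left x y) (mul_le_right x y)
        have h2 : n ≤ CRL.himp (x * y) 0 := neg_antitone h1
        calc n * (CRL.himp (CRL.himp x 0) 0 * CRL.himp (CRL.himp y 0) 0)
            ≤ CRL.himp (x*y) 0 * (CRL.himp (CRL.himp x 0) 0 * CRL.himp (CRL.himp y 0) 0) :=
              mul_le_mul'' h2 le_rfl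
          _ = CRL.himp (CRL.himp x 0) 0 * CRL.himp (CRL.himp y 0) 0 * CRL.himp (x*y) 0 :=
              mul_comm _ _
          _ ≤ 0 := negneg_mul x y
      have e1 : n = n * CRL.himp x 0 ⊔ n * CRL.himp (CRL.himp x 0) 0 := by
        conv_lhs => rw [← mul_one n, ← StoneanRL.stone x, crl_mul_sup]
      rw [e1]
      apply sup_le
      · exact le_trans (mul_le_right n _) le_sup_left
      · have e2 : n * CRL.himp (CRL.himp x 0) 0
            = (n * CRL.himp (CRL.himp x 0) 0) * CRL.himp y 0
              ⊔ (n * CRL.himp (CRL.himp x 0) 0) * CRL.himp (CRL.himp y 0) 0 := by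
          conv_lhs => rw [← mul_one (n * CRL.himp (CRL.himp x 0) 0), ← StoneanRL.stone y, crl_mul_sup]
        rw [e2]
        apply sup_le
        · exact le_trans (mul_le_right _ _) le_sup_right
        · have : (n * CRL.himp (CRL.himp x 0) 0) * CRL.himp (CRL.himp y 0) 0 ≤ 0 := by
            rw [mul_assoc]; exact key
          exact le_trans this (le_trans (zle _) le_sup_left)
    · exact sup_le (neg_antitone inf_le_left) (neg_antitone inf_le_right)
  · -- (iv)
    apply le_antisymm (le_inf (le_negneg x) le_sup_right)
    set m := CRL.himp (CRL.himp x 0) 0 ⊓ (CRL.himp x 0 ⊔ x) with hm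
    have : m = m * CRL.himp x 0 ⊔ m * CRL.himp (CRL.himp x 0) 0 := by
      conv_lhs => rw [← mul_one m, ← StoneanRL.stone x, crl_mul_sup]
    rw [this]
    apply sup_le
    · calc m * CRL.himp x 0 ≤ CRL.himp (CRL.himp x 0) 0 * CRL.himp x 0 :=
            mul_le_mul'' inf_le_left le_rfl
        _ = CRL.himp x 0 * CRL.himp (CRL.himp x 0) 0 := mul_comm _ _
        _ ≤ 0 := mul_neg_le _
        _ ≤ x := zle x
    · calc m * CRL.himp (CRL.himp x 0) 0 ≤ (CRL.himp x 0 ⊔ x) * CRL.himp (CRL.himp x 0) 0 :=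
            mul_le_mul'' inf_le_right le_rfl
        _ = CRL.himp (CRL.himp x 0) 0 * CRL.himp x 0 ⊔ CRL.himp (CRL.himp x 0) 0 * x := by
            rw [mul_comm, crl_mul_sup]
        _ ≤ x := by
            apply sup_le
            · calc CRL.himp (CRL.himp x 0) 0 * CRL.himp x 0
                  = CRL.himp x 0 * CRL.himp (CRL.himp x 0) 0 := mul_comm _ _
                _ ≤ 0 := mul_neg_le _
                _ ≤ x := zle x
            · exact mul_le_right _ x
        _ ≤ x := le_rfl
end

section
/- Let A be a Stonean residuated lattice and F a lattice filter of A. Then F is good (i.e. ¬¬x ∈ F implies x ∈ F) if and only if F contains every dense element of A (i.e. ¬x = 0 implies x ∈ F). -/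
section Aux
variable {α : Type*}

lemma CRL.mul_le_mul_left' [CRL α] {b c : α} (h : b ≤ c) (a : α) :
    a * b ≤ a * c := by
  have h1 : c * a ≤ a * c := by rw [mul_comm]
  have h2 : c ≤ CRL.himp a (a * c) := (CRL.resid c a (a * c)).mp h1
  have h3 : b ≤ CRL.himp a (a * c) := le_trans h h2
  have h4 : b * a ≤ a * c := (CRL.resid b a (a * c)).mpr h3
  rwa [mul_comm b a] at h4

lemma CRL.mul_le_mul_right'' [CRL α] {a b : α} (h : a ≤ b) (c : α) :
    a * c ≤ b * c := by
  rw [mul_comm a c, mul_comm b c]; exact CRL.mul_le_mul_left' h c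

lemma CRL.mul_sup [CRL α] (a b c : α) : a * (b ⊔ c) = a * b ⊔ a * c := by
  apply le_antisymm
  · have hb : b ≤ CRL.himp a (a * b ⊔ a * c) :=
      (CRL.resid b a _).mp (by rw [mul_comm]; exact le_sup_left)
    have hc : c ≤ CRL.himp a (a * b ⊔ a * c) :=
      (CRL.resid c a _).mp (by rw [mul_comm]; exact le_sup_right)
    have h : b ⊔ c ≤ CRL.himp a (a * b ⊔ a * c) := sup_le hb hc
    have := (CRL.resid (b ⊔ c) a _).mpr h
    rwa [mul_comm] at this
  · exact sup_le (CRL.mul_le_mul_left' le_sup_left a)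
      (CRL.mul_le_mul_left' le_sup_right a)

lemma BCRL.mul_neg_self [BCRL α] (x : α) : x * CRL.himp x 0 ≤ 0 := by
  have := (CRL.resid (CRL.himp x 0) x 0).mpr (le_refl _)
  rwa [mul_comm] at this

lemma BCRL.neg_antitone [BCRL α] {a b : α} (h : a ≤ b) :
    CRL.himp b 0 ≤ CRL.himp a 0 := by
  apply (CRL.resid _ a 0).mp
  calc CRL.himp b 0 * a ≤ CRL.himp b 0 * b := CRL.mul_le_mul_left' h _
    _ = b * CRL.himp b 0 := mul_comm _ _
    _ ≤ 0 := BCRL.mul_neg_self b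

/-- ¬x ⊓ ¬¬x = 0 in a Stonean (indeed any) BCRL. -/
lemma BCRL.neg_inf_negneg [StoneanRL α] (x : α) :
    CRL.himp x 0 ⊓ CRL.himp (CRL.himp x 0) 0 = 0 := by
  set n := CRL.himp x 0
  set m := n ⊓ CRL.himp n 0
  have h1 : m = m * (n ⊔ CRL.himp n 0) := by
    rw [StoneanRL.stone x, mul_one]
  have h2 : m * n ≤ 0 := by
    calc m * n ≤ CRL.himp n 0 * n := CRL.mul_le_mul_right'' inf_le_right n
      _ = n * CRL.himp n 0 := mul_comm _ _
      _ ≤ 0 := BCRL.mul_neg_self n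
  have h3 : m * CRL.himp n 0 ≤ 0 := by
    calc m * CRL.himp n 0 ≤ n * CRL.himp n 0 := CRL.mul_le_mul_right'' inf_le_left _
      _ ≤ 0 := BCRL.mul_neg_self n
  have : m ≤ 0 := by
    rw [h1, CRL.mul_sup]
    exact sup_le h2 h3
  exact le_antisymm this (BCRL.zero_le m)

end Aux

/-- in a Stonean residuated lattice, a lattice filter `F` is
good (`¬¬x ∈ F → x ∈ F`) if and only if it contains every dense element
(`¬x = 0 → x ∈ F`). -/
theorem stonean_good_filter_iff_contains_dense {α : Type*} [StoneanRL α]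
    (F : Set α) (hF : IsLatticeFilter F) :
    (∀ x : α, CRL.himp (CRL.himp x 0) 0 ∈ F → x ∈ F) ↔
    (∀ x : α, CRL.himp x 0 = 0 → x ∈ F) := by
  obtain ⟨⟨a, ha⟩, hup, hinf⟩ := hF
  have hone : (1 : α) ∈ F := hup a ha 1 (CIRL.le_one a)
  constructor
  · intro hgood x hx
    apply hgood x
    have h00 : (1 : α) ≤ CRL.himp (0 : α) 0 := by
      apply (CRL.resid 1 0 0).mp
      rw [one_mul]
    rw [hx]
    exact hup 1 hone _ h00
  · intro hdense x hx
    -- x ⊔ ¬x is dense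
    have hd : CRL.himp (x ⊔ CRL.himp x 0) 0 = 0 := by
      have h1 : CRL.himp (x ⊔ CRL.himp x 0) 0 ≤ CRL.himp x 0 :=
        BCRL.neg_antitone le_sup_left
      have h2 : CRL.himp (x ⊔ CRL.himp x 0) 0 ≤ CRL.himp (CRL.himp x 0) 0 :=
        BCRL.neg_antitone le_sup_right
      have h3 : CRL.himp (x ⊔ CRL.himp x 0) 0 ≤ 0 := by
        calc CRL.himp (x ⊔ CRL.himp x 0) 0
            ≤ CRL.himp x 0 ⊓ CRL.himp (CRL.himp x 0) 0 := le_inf h1 h2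
          _ = 0 := BCRL.neg_inf_negneg x
      exact le_antisymm h3 (BCRL.zero_le _)
    have hdF : x ⊔ CRL.himp x 0 ∈ F := hdense _ hd
    have hmF : CRL.himp (CRL.himp x 0) 0 ⊓ (x ⊔ CRL.himp x 0) ∈ F :=
      hinf _ hx _ hdF
    -- show this meet is ≤ x
    set n := CRL.himp x 0
    set m := CRL.himp n 0 ⊓ (x ⊔ n)
    have h1 : m = m * (n ⊔ CRL.himp n 0) := by
      rw [StoneanRL.stone x, mul_one]
    have h2 : m * n ≤ 0 := by
      calc m * n ≤ CRL.himp n 0 * n := CRL.mul_le_mul_right'' inf_le_left n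
        _ = n * CRL.himp n 0 := mul_comm _ _
        _ ≤ 0 := BCRL.mul_neg_self n
    have h3 : m * CRL.himp n 0 ≤ x := by
      calc m * CRL.himp n 0 ≤ (x ⊔ n) * CRL.himp n 0 :=
            CRL.mul_le_mul_right'' inf_le_right _
        _ = CRL.himp n 0 * (x ⊔ n) := mul_comm _ _
        _ = CRL.himp n 0 * x ⊔ CRL.himp n 0 * n := CRL.mul_sup _ _ _
        _ ≤ x ⊔ (0 : α) := by
            apply sup_le_sup
            · calc CRL.himp n 0 * x = x * CRL.himp n 0 := mul_comm _ _
                _ ≤ x * 1 := CRL.mul_le_mul_left' (CIRL.le_one _) x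
                _ = x := mul_one x
            · calc CRL.himp n 0 * n = n * CRL.himp n 0 := mul_comm _ _
                _ ≤ 0 := BCRL.mul_neg_self n
        _ ≤ x := sup_le le_rfl (BCRL.zero_le x)
    have hmx : m ≤ x := by
      rw [h1, CRL.mul_sup]
      exact sup_le (le_trans h2 (BCRL.zero_le x)) h3
    exact hup m hmF x hmx
end

section
/- Let A be a Stonean residuated lattice and let S be an admissible subalgebra of the twist-product K(A) (a subset containing (1,1), (0,1) and (a,1) for every a ∈ A, closed under the operations of K(A)). Then S is good: for all a, b ∈ A, if (¬¬a, ¬¬b) ∈ S then (a,b) ∈ S. -/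
namespace Aux
open CRL
variable {α : Type*} [StoneanRL α] (a b c : α)

lemma resid' {a b c : α} : a * b ≤ c ↔ a ≤ himp b c := CRL.resid a b c

lemma himp_mul_le : himp a b * a ≤ b := resid'.mpr le_rfl

lemma mul_le_mul' {a b c d : α} (h1 : a ≤ b) (h2 : c ≤ d) : a * c ≤ b * d := by
  have hb : a * c ≤ b * c := resid'.mpr (le_trans h1 (resid'.mp le_rfl))
  have hc : b * c ≤ b * d := by
    rw [mul_comm b c, mul_comm b d]
    exact resid'.mpr (le_trans h2 (resid'.mp le_rfl))
  exact le_trans hb hc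

lemma mul_le_left : a * b ≤ a := by
  calc a * b ≤ a * 1 := mul_le_mul' le_rfl (CIRL.le_one b)
  _ = a := mul_one a

lemma mul_le_right : a * b ≤ b := by rw [mul_comm]; exact mul_le_left b a

lemma mul_sup : a * (b ⊔ c) = a * b ⊔ a * c := by
  apply le_antisymm
  · rw [mul_comm]
    refine resid'.mpr (sup_le ?_ ?_)
    · exact resid'.mp (by rw [mul_comm]; exact le_sup_left)
    · exact resid'.mp (by rw [mul_comm]; exact le_sup_right)
  · exact sup_le (mul_le_mul' le_rfl le_sup_left) (mul_le_mul' le_rfl le_sup_right)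

lemma himp_mono {b c : α} (a : α) (h : b ≤ c) : himp a b ≤ himp a c :=
  resid'.mp (le_trans (himp_mul_le a b) h)

lemma himp_anti {a b : α} (c : α) (h : a ≤ b) : himp b c ≤ himp a c :=
  resid'.mp (le_trans (mul_le_mul' le_rfl h) (himp_mul_le b c))

lemma le_himp_left : b ≤ himp a b := resid'.mp (mul_le_left b a)

lemma sup_himp : himp (a ⊔ b) c = himp a c ⊓ himp b c := by
  apply le_antisymm
  · exact le_inf (himp_anti c le_sup_left) (himp_anti c le_sup_right)
  · refine resid'.mp ?_
    rw [mul_sup]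
    exact sup_le (le_trans (mul_le_mul' inf_le_left le_rfl) (himp_mul_le a c))
      (le_trans (mul_le_mul' inf_le_right le_rfl) (himp_mul_le b c))

lemma himp_one : himp a (1 : α) = 1 :=
  le_antisymm (CIRL.le_one _) (resid'.mp (CIRL.le_one _))

lemma one_himp : himp (1 : α) a = a :=
  le_antisymm (by simpa using himp_mul_le (1 : α) a) (resid'.mp (by rw [mul_one]))

lemma sup_one : a ⊔ (1 : α) = 1 := le_antisymm (CIRL.le_one _) le_sup_right

lemma inf_one : a ⊓ (1 : α) = a := le_antisymm inf_le_left (le_inf le_rfl (CIRL.le_one _))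

lemma one_inf : (1 : α) ⊓ a = a := le_antisymm inf_le_right (le_inf (CIRL.le_one _) le_rfl)

lemma mul_neg : a * himp a 0 = 0 :=
  le_antisymm (by rw [mul_comm]; exact himp_mul_le a 0) (BCRL.zero_le _)

lemma neg_mul : himp a 0 * a = 0 := by rw [mul_comm]; exact mul_neg a

lemma le_nn : a ≤ himp (himp a 0) 0 := resid'.mp (le_of_eq (mul_neg a))

lemma stone' : himp (himp a 0) 0 ⊔ himp a 0 = (1 : α) := by
  rw [sup_comm]; exact StoneanRL.stone a

lemma nn_mul_neg : himp (himp a 0) 0 * himp a 0 = 0 := by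
  rw [mul_comm]; exact mul_neg (himp a 0)

-- complement lemmas: u ⊔ v = 1, u * v = 0
section compl

lemma compl_inf {u v : α} (hsup : u ⊔ v = 1) (hmul : u * v = 0) : u ⊓ v = (0 : α) := by
  apply le_antisymm _ (BCRL.zero_le _)
  calc u ⊓ v = (u ⊓ v) * (u ⊔ v) := by rw [hsup, mul_one]
  _ = (u ⊓ v) * u ⊔ (u ⊓ v) * v := mul_sup _ _ _
  _ ≤ 0 := by
      refine sup_le ?_ ?_
      · calc (u ⊓ v) * u ≤ v * u := mul_le_mul' inf_le_right le_rfl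
        _ = u * v := mul_comm v u
        _ ≤ 0 := le_of_eq hmul
      · calc (u ⊓ v) * v ≤ u * v := mul_le_mul' inf_le_left le_rfl
        _ ≤ 0 := le_of_eq hmul

lemma mul_compl_inf {u v : α} (hsup : u ⊔ v = 1) (hmul : u * v = 0) (x : α) : u * x = u ⊓ x := by
  apply le_antisymm (le_inf (mul_le_left _ _) (mul_le_right _ _))
  calc u ⊓ x = (u ⊓ x) * (u ⊔ v) := by rw [hsup, mul_one]
  _ = (u ⊓ x) * u ⊔ (u ⊓ x) * v := mul_sup _ _ _
  _ ≤ u * x := by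
      refine sup_le ?_ ?_
      · calc (u ⊓ x) * u ≤ x * u := mul_le_mul' inf_le_right le_rfl
        _ = u * x := mul_comm x u
      · calc (u ⊓ x) * v ≤ u * v := mul_le_mul' inf_le_left le_rfl
        _ ≤ u * x := by rw [hmul]; exact BCRL.zero_le _

lemma himp_compl {u v : α} (hsup : u ⊔ v = 1) (hmul : u * v = 0) (c : α) : himp u c = v ⊔ c := by
  apply le_antisymm
  · calc himp u c = himp u c * (u ⊔ v) := by rw [hsup, mul_one]
    _ = himp u c * u ⊔ himp u c * v := mul_sup _ _ _
    _ ≤ v ⊔ c := by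
        refine sup_le (le_trans (himp_mul_le u c) le_sup_right) ?_
        exact le_trans (mul_le_right _ _) le_sup_left
  · refine resid'.mp ?_
    rw [mul_comm, mul_sup]
    refine sup_le ?_ (mul_le_right _ _)
    rw [hmul]
    exact BCRL.zero_le c

end compl


lemma himp_self (a : α) : himp a a = 1 :=
  le_antisymm (CIRL.le_one _) (resid'.mp (le_of_eq (one_mul a)))

lemma mul_nn_self (a : α) : a * himp (himp a 0) 0 = a := by
  apply le_antisymm (mul_le_left _ _)
  calc a = a * (himp (himp a 0) 0 ⊔ himp a 0) := by rw [stone', mul_one]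
  _ = a * himp (himp a 0) 0 ⊔ a * himp a 0 := mul_sup _ _ _
  _ ≤ a * himp (himp a 0) 0 := sup_le le_rfl (by rw [mul_neg]; exact BCRL.zero_le _)

lemma nn_mul_self (a : α) : himp (himp a 0) 0 * a = a := by
  rw [mul_comm]; exact mul_nn_self a

lemma sup_mul' (a b c : α) : (a ⊔ b) * c = a * c ⊔ b * c := by
  rw [mul_comm, mul_sup, mul_comm c a, mul_comm c b]

lemma himp_neg (a d : α) : himp a (himp d 0) = himp a 0 ⊔ himp d 0 := by
  apply le_antisymm
  · set z := himp a (himp d 0) with hzdef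
    have hz : z = z * himp (himp a 0) 0 ⊔ z * himp a 0 := by
      rw [← mul_sup, stone', mul_one]
    nth_rewrite 1 [hz]
    refine sup_le ?_ (le_trans (mul_le_right _ _) le_sup_left)
    refine le_trans ?_ le_sup_right
    -- z * nn a ≤ himp d 0
    refine resid'.mp ?_
    have hw1 : z * himp (himp a 0) 0 * d * a ≤ 0 :=
      calc z * himp (himp a 0) 0 * d * a ≤ z * 1 * d * a :=
            mul_le_mul' (mul_le_mul' (mul_le_mul' le_rfl (CIRL.le_one _)) le_rfl) le_rfl
      _ = z * a * d := by rw [mul_one, mul_right_comm]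
      _ ≤ himp d 0 * d := mul_le_mul' (himp_mul_le a _) le_rfl
      _ = 0 := neg_mul d
    have hw2 : z * himp (himp a 0) 0 * d ≤ himp a 0 := resid'.mp hw1
    have hw3 : z * himp (himp a 0) 0 * d ≤ himp (himp a 0) 0 :=
      le_trans (mul_le_left _ _) (mul_le_right _ _)
    calc z * himp (himp a 0) 0 * d ≤ himp (himp a 0) 0 ⊓ himp a 0 := le_inf hw3 hw2
    _ = 0 := compl_inf (stone' a) (nn_mul_neg a)
  · refine sup_le (resid'.mp ?_) (le_himp_left _ _)
    rw [neg_mul]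
    exact BCRL.zero_le _

lemma first_le (a b t : α)
    (h1 : t ≤ himp (himp (himp a 0) 0 ⊓ b ⊔ (himp a 0 ⊔ himp b 0))
            ((himp a 0 ⊔ a) ⊓ himp b a ⊓ (himp (himp a 0) 0 ⊔ himp (himp b 0) 0)))
    (h2 : t ≤ himp ((himp (himp a 0) 0 ⊔ b) * (himp a 0 ⊔ himp (himp b 0) 0)) a) :
    t ≤ a := by
  have hEF1 : himp (himp a 0) 0 ⊔ himp a 0 = 1 := stone' a
  have hGH1 : himp (himp b 0) 0 ⊔ himp b 0 = 1 := stone' b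
  have hEF0 : himp (himp a 0) 0 * himp a 0 = 0 := nn_mul_neg a
  have hGH0 : himp (himp b 0) 0 * himp b 0 = 0 := nn_mul_neg b
  set E := himp (himp a 0) 0 with hE
  set F := himp a 0 with hF
  set G := himp (himp b 0) 0 with hG
  set H := himp b 0 with hH
  set C1 := E ⊓ b ⊔ (F ⊔ H) with hC1
  set D1 := (F ⊔ a) ⊓ himp b a ⊓ (E ⊔ G) with hD1
  set D2 := (E ⊔ b) * (F ⊔ G) with hD2
  have hEFi : E ⊓ F = 0 := compl_inf hEF1 hEF0
  have hGHi : G ⊓ H = 0 := compl_inf hGH1 hGH0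
  have haE : a * E = a := mul_nn_self a
  have haF : a * F = 0 := mul_neg a
  have htC : ∀ x : α, x ≤ C1 → t * x ≤ D1 := fun x hx =>
    le_trans (mul_le_mul' h1 hx) (himp_mul_le _ _)
  have htD : t * D2 ≤ a := le_trans (mul_le_mul' h2 le_rfl) (himp_mul_le _ _)
  -- piece A
  have pA : t * (E * G) ≤ a :=
    le_trans (mul_le_mul' le_rfl (mul_le_mul' le_sup_left le_sup_right : E * G ≤ D2)) htD
  -- t * H ≤ D1
  have h5 : t * H ≤ D1 := htC H (le_trans le_sup_right le_sup_right)
  -- piece B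
  have pB : t * (E * H) ≤ a := by
    calc t * (E * H) = t * H * E := by rw [mul_comm E H, ← mul_assoc]
    _ ≤ D1 * E := mul_le_mul' h5 le_rfl
    _ ≤ (F ⊔ a) * E := mul_le_mul' (le_trans inf_le_left inf_le_left) le_rfl
    _ = F * E ⊔ a * E := sup_mul' _ _ _
    _ ≤ a := by
        refine sup_le ?_ (le_of_eq haE)
        rw [mul_comm F E, hEF0]
        exact BCRL.zero_le _
  -- piece C
  have pC : t * (F * H) ≤ a := by
    have c1 : t * (F * H) ≤ G := by
      calc t * (F * H) = t * H * F := by rw [mul_comm F H, ← mul_assoc]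
      _ ≤ D1 * F := mul_le_mul' h5 le_rfl
      _ ≤ (E ⊔ G) * F := mul_le_mul' inf_le_right le_rfl
      _ = E * F ⊔ G * F := sup_mul' _ _ _
      _ ≤ G := by
          refine sup_le ?_ (mul_le_left _ _)
          rw [hEF0]; exact BCRL.zero_le _
    have c2 : t * (F * H) ≤ H := le_trans (mul_le_right _ _) (mul_le_right _ _)
    calc t * (F * H) ≤ G ⊓ H := le_inf c1 c2
    _ = 0 := hGHi
    _ ≤ a := BCRL.zero_le _
  -- piece D
  have pD : t * (F * G) ≤ a := by
    have h6 : t * F ≤ D1 := htC F (le_trans le_sup_left le_sup_right)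
    have h7 : t * F ≤ himp b a ⊓ F :=
      le_inf (le_trans h6 (le_trans inf_le_left inf_le_right)) (mul_le_right _ _)
    have hba : himp b a * F ≤ H := by
      refine resid'.mp ?_
      calc himp b a * F * b = himp b a * b * F := mul_right_comm _ _ _
      _ ≤ a * F := mul_le_mul' (himp_mul_le b a) le_rfl
      _ = 0 := haF
    have c3 : (himp b a ⊓ F) * G ≤ 0 := by
      have d1 : (himp b a ⊓ F) * G * F ≤ H := by
        calc (himp b a ⊓ F) * G * F ≤ himp b a * G * F :=
              mul_le_mul' (mul_le_mul' inf_le_left le_rfl) le_rfl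
        _ = himp b a * F * G := mul_right_comm _ _ _
        _ ≤ H * 1 := mul_le_mul' hba (CIRL.le_one G)
        _ = H := mul_one H
      have d2 : (himp b a ⊓ F) * G * F ≤ G := le_trans (mul_le_left _ _) (mul_le_right _ _)
      have d3 : (himp b a ⊓ F) * G * F ≤ 0 := by
        calc (himp b a ⊓ F) * G * F ≤ G ⊓ H := le_inf d2 d1
        _ = 0 := hGHi
      have d4 : (himp b a ⊓ F) * G ≤ E := resid'.mp d3
      have d5 : (himp b a ⊓ F) * G ≤ F := le_trans (mul_le_left _ _) inf_le_right
      calc (himp b a ⊓ F) * G ≤ E ⊓ F := le_inf d4 d5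
      _ = 0 := hEFi
    calc t * (F * G) = t * F * G := (mul_assoc _ _ _).symm
    _ ≤ (himp b a ⊓ F) * G := mul_le_mul' h7 le_rfl
    _ ≤ 0 := c3
    _ ≤ a := BCRL.zero_le _
  calc t = t * ((E ⊔ F) * (G ⊔ H)) := by rw [hEF1, hGH1, one_mul, mul_one]
  _ = t * (E * G ⊔ E * H ⊔ (F * G ⊔ F * H)) := by
      rw [sup_mul' E F (G ⊔ H), mul_sup E G H, mul_sup F G H]
  _ = t * (E * G ⊔ E * H) ⊔ t * (F * G ⊔ F * H) := mul_sup _ _ _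
  _ = t * (E * G) ⊔ t * (E * H) ⊔ (t * (F * G) ⊔ t * (F * H)) := by
      rw [mul_sup t (E * G) (E * H), mul_sup t (F * G) (F * H)]
  _ ≤ a := sup_le (sup_le pA pB) (sup_le pD pC)

lemma first_ge (a b : α) :
    a ≤ himp (himp (himp a 0) 0 ⊓ b ⊔ (himp a 0 ⊔ himp b 0))
            ((himp a 0 ⊔ a) ⊓ himp b a ⊓ (himp (himp a 0) 0 ⊔ himp (himp b 0) 0)) ⊓
        himp ((himp (himp a 0) 0 ⊔ b) * (himp a 0 ⊔ himp (himp b 0) 0)) a := by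
  refine le_inf (resid'.mp ?_) (resid'.mp (mul_le_left a _))
  rw [mul_sup, mul_sup]
  refine sup_le ?_ (sup_le ?_ ?_)
  · refine le_inf (le_inf ?_ ?_) ?_
    · exact le_trans (mul_le_left _ _) le_sup_right
    · exact resid'.mp (le_trans (mul_le_mul' (mul_le_left _ _) le_rfl) (mul_le_left a b))
    · exact le_trans (mul_le_right _ _) (le_trans inf_le_left le_sup_left)
  · rw [mul_neg]
    exact BCRL.zero_le _
  · refine le_inf (le_inf ?_ ?_) ?_
    · exact le_trans (mul_le_left _ _) le_sup_right
    · exact resid'.mp (le_trans (mul_le_mul' (mul_le_left _ _) le_rfl) (mul_le_left a b))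
    · exact le_trans (mul_le_left _ _) (le_trans (le_nn a) le_sup_left)

lemma second_eq (a b : α) :
    (himp (himp a 0) 0 ⊓ b ⊔ (himp a 0 ⊔ himp b 0)) *
      ((himp (himp a 0) 0 ⊔ b) * (himp a 0 ⊔ himp (himp b 0) 0)) = b := by
  have hEF1 : himp (himp a 0) 0 ⊔ himp a 0 = 1 := stone' a
  have hEF0 : himp (himp a 0) 0 * himp a 0 = 0 := nn_mul_neg a
  have hHG0 : himp b 0 * himp (himp b 0) 0 = 0 := mul_neg (himp b 0)
  have hbG : b * himp (himp b 0) 0 = b := mul_nn_self b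
  set E := himp (himp a 0) 0 with hE
  set F := himp a 0 with hF
  set G := himp (himp b 0) 0 with hG
  set H := himp b 0 with hH
  apply le_antisymm
  · rw [sup_mul']
    refine sup_le (le_trans (mul_le_left _ _) inf_le_right) ?_
    have hFH : (F ⊔ H) * (F ⊔ G) ≤ F := by
      rw [sup_mul', mul_sup, mul_sup]
      refine sup_le (sup_le (mul_le_left _ _) (mul_le_left _ _)) (sup_le (mul_le_right _ _) ?_)
      rw [hHG0]
      exact BCRL.zero_le _
    calc (F ⊔ H) * ((E ⊔ b) * (F ⊔ G)) = (F ⊔ H) * (F ⊔ G) * (E ⊔ b) := by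
          rw [mul_comm (E ⊔ b) (F ⊔ G), ← mul_assoc]
    _ ≤ F * (E ⊔ b) := mul_le_mul' hFH le_rfl
    _ = F * E ⊔ F * b := mul_sup _ _ _
    _ ≤ b := by
        refine sup_le ?_ (mul_le_right _ _)
        rw [mul_comm F E, hEF0]
        exact BCRL.zero_le _
  · have hEE : E * E = E := by
      rw [mul_compl_inf hEF1 hEF0 E, inf_idem]
    have hEb : (E ⊓ b) * (E * G) = E * b := by
      rw [← mul_compl_inf hEF1 hEF0 b]
      calc E * b * (E * G) = E * E * (b * G) := mul_mul_mul_comm _ _ _ _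
      _ = E * (b * G) := by rw [hEE]
      _ = E * b := by rw [hbG]
    calc b = b * (E ⊔ F) := by rw [hEF1, mul_one]
    _ = b * E ⊔ b * F := mul_sup _ _ _
    _ ≤ (E ⊓ b ⊔ (F ⊔ H)) * ((E ⊔ b) * (F ⊔ G)) := by
        refine sup_le ?_ ?_
        · calc b * E = (E ⊓ b) * (E * G) := by rw [hEb, mul_comm]
          _ ≤ (E ⊓ b ⊔ (F ⊔ H)) * ((E ⊔ b) * (F ⊔ G)) :=
              mul_le_mul' le_sup_left (mul_le_mul' le_sup_left le_sup_right)
        · calc b * F = F * (b * G) := by rw [hbG, mul_comm]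
          _ ≤ (E ⊓ b ⊔ (F ⊔ H)) * ((E ⊔ b) * (F ⊔ G)) :=
              mul_le_mul' (le_trans le_sup_left le_sup_right)
                (mul_le_mul' le_sup_right le_sup_right)

lemma key (a b : α) :
    Twist.khimp
      (Twist.kjoin (Twist.kmeet ((himp (himp a 0) 0, himp (himp b 0) 0) : α × α) (b, 1))
        (Twist.khimp ((a, 1) : α × α) (himp b 0, 1)))
      (Twist.khimp (Twist.kjoin ((himp (himp a 0) 0, himp (himp b 0) 0) : α × α) (b, 1))
        (Twist.kmul ((himp (himp a 0) 0, himp (himp b 0) 0) : α × α) (a, 1)))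
    = ((a, b) : α × α) := by
  simp only [Twist.khimp, Twist.kjoin, Twist.kmeet, Twist.kmul]
  simp only [one_himp, himp_one, mul_one, sup_one, inf_one, one_inf, nn_mul_self]
  rw [himp_neg a b, himp_neg a (himp b 0)]
  rw [sup_himp (himp (himp a 0) 0) b a,
    himp_compl (stone' a) (nn_mul_neg a) a,
    sup_himp (himp a 0) (himp (himp b 0) 0) (himp (himp b 0) 0),
    himp_self, inf_one, himp_neg (himp a 0) (himp b 0)]
  rw [Prod.mk.injEq]
  exact ⟨le_antisymm (first_le a b _ inf_le_left inf_le_right) (first_ge a b),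
    second_eq a b⟩

end Aux

/-- every admissible subalgebra of the twist-product `K(A)` of a
Stonean residuated lattice `A` is good: if `(¬¬a, ¬¬b) ∈ S` then `(a,b) ∈ S`. -/
theorem stonean_admissible_is_good {α : Type*} [StoneanRL α]
    (S : Set (α × α)) (hS : IsAdmissible S) (a b : α)
    (h : ((CRL.himp (CRL.himp a 0) 0, CRL.himp (CRL.himp b 0) 0) : α × α) ∈ S) :
    ((a, b) : α × α) ∈ S := by
  obtain ⟨h11, h01, hx1, hcl⟩ := hS
  have hb1 := hx1 b
  have ha1 := hx1 a
  have hnb1 := hx1 (CRL.himp b 0)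
  have hA1 := (hcl _ h _ hb1).2.1
  have hA2 := (hcl _ ha1 _ hnb1).2.2.2
  have hT1 := (hcl _ hA1 _ hA2).1
  have hB1 := (hcl _ h _ hb1).1
  have hB2 := (hcl _ h _ ha1).2.2.1
  have hT2 := (hcl _ hB1 _ hB2).2.2.2
  have hT := (hcl _ hT1 _ hT2).2.2.2
  rwa [Aux.key a b] at hT
end

section
/- Let A be a Stonean residuated lattice. For every lattice filter F of A containing all dense elements, the set S_F = {(a,b) ∈ A × A : ¬a → ¬¬b ∈ F} is an admissible subalgebra of the twist-product K(A), and the map F ↦ S_F is a bijection from the set of lattice filters of A containing all dense elements onto the set of all admissible subalgebras of K(A). -/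
/-- `S_F = {(a,b) : ¬a → ¬¬b ∈ F}`. -/
def SF {α : Type*} [StoneanRL α] (F : Set α) : Set (α × α) :=
  {p : α × α | CRL.himp (CRL.himp p.1 0) (CRL.himp (CRL.himp p.2 0) 0) ∈ F}

namespace SP

variable {α : Type*}

section B
variable [BCRL α]

def NG (a : α) : α := CRL.himp a 0

def EE (a b : α) : α := CRL.himp (NG a) (NG (NG b))

lemma resid' {a b c : α} : a * b ≤ c ↔ a ≤ CRL.himp b c := CRL.resid a b c

lemma himp_mul_le (b c : α) : CRL.himp b c * b ≤ c := resid'.mpr le_rfl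

lemma le_himp_of {a b c : α} (h : a * b ≤ c) : a ≤ CRL.himp b c := resid'.mp h

lemma le_one' (a : α) : a ≤ 1 := CIRL.le_one a
lemma zero_le' (a : α) : (0:α) ≤ a := BCRL.zero_le a

lemma mul_le_mul_r {a b : α} (h : a ≤ b) (c : α) : a * c ≤ b * c :=
  resid'.mpr (h.trans (le_himp_of le_rfl))

lemma mul_le_mul_l {a b : α} (h : a ≤ b) (c : α) : c * a ≤ c * b := by
  rw [mul_comm c a, mul_comm c b]; exact mul_le_mul_r h c

lemma mul_le_mul'' {a b c d : α} (h1 : a ≤ b) (h2 : c ≤ d) : a * c ≤ b * d :=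
  (mul_le_mul_r h1 c).trans (mul_le_mul_l h2 b)

lemma mul_le_left' {a b : α} : a * b ≤ a := by
  have := mul_le_mul_l (le_one' b) a; rwa [mul_one] at this

lemma mul_le_right' {a b : α} : a * b ≤ b := by rw [mul_comm]; exact mul_le_left'

lemma himp_le_himp' {a a' b b' : α} (h1 : a' ≤ a) (h2 : b ≤ b') :
    CRL.himp a b ≤ CRL.himp a' b' :=
  le_himp_of ((mul_le_mul_l h1 _).trans ((himp_mul_le a b).trans h2))

lemma one_himp' (a : α) : CRL.himp 1 a = a := by
  apply le_antisymm
  · have := himp_mul_le (1:α) a; rwa [mul_one] at this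
  · exact le_himp_of (by rw [mul_one])

lemma himp_one' (a : α) : CRL.himp a 1 = 1 :=
  le_antisymm (le_one' _) (le_himp_of (le_one' _))

lemma le_himp_self' {a b : α} : a ≤ CRL.himp b a := le_himp_of mul_le_left'

lemma mul_zero' (a : α) : a * 0 = 0 := by
  apply le_antisymm _ (zero_le' _)
  have := mul_le_mul_r (le_one' a) (0:α)
  rwa [one_mul] at this

lemma zero_mul' (a : α) : (0:α) * a = 0 := by rw [mul_comm]; exact mul_zero' a

lemma zero_himp' (a : α) : CRL.himp 0 a = 1 :=
  le_antisymm (le_one' _) (le_himp_of (by rw [mul_zero']; exact zero_le' a))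

lemma NG_one : NG (1:α) = 0 := one_himp' 0
lemma NG_zero : NG (0:α) = 1 := zero_himp' 0

lemma mul_ng (a : α) : a * NG a = 0 :=
  le_antisymm (by rw [mul_comm]; exact himp_mul_le a 0) (zero_le' _)

lemma ng_mul (a : α) : NG a * a = 0 := le_antisymm (himp_mul_le a 0) (zero_le' _)

lemma le_ngng (a : α) : a ≤ NG (NG a) := le_himp_of (mul_ng a).le

lemma ng_anti {a b : α} (h : a ≤ b) : NG b ≤ NG a := himp_le_himp' h le_rfl

lemma ngng_mono {a b : α} (h : a ≤ b) : NG (NG a) ≤ NG (NG b) := ng_anti (ng_anti h)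

lemma ng_ngng (a : α) : NG (NG (NG a)) = NG a :=
  le_antisymm (ng_anti (le_ngng a)) (le_ngng (NG a))

lemma ngng_ngng (a : α) : NG (NG (NG (NG a))) = NG (NG a) := by rw [ng_ngng]

lemma mul_sup' (a b c : α) : a * (b ⊔ c) = a * b ⊔ a * c := by
  apply le_antisymm
  · rw [mul_comm]
    apply resid'.mpr
    apply sup_le
    · have hb : b * a ≤ a * b ⊔ a * c := by rw [mul_comm]; exact le_sup_left
      exact le_himp_of hb
    · have hc : c * a ≤ a * b ⊔ a * c := by rw [mul_comm]; exact le_sup_right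
      exact le_himp_of hc
  · exact sup_le (mul_le_mul_l le_sup_left a) (mul_le_mul_l le_sup_right a)

lemma himp_inf' (a b c : α) : CRL.himp a (b ⊓ c) = CRL.himp a b ⊓ CRL.himp a c :=
  le_antisymm (le_inf (himp_le_himp' le_rfl inf_le_left) (himp_le_himp' le_rfl inf_le_right))
    (le_himp_of (le_inf ((mul_le_mul_r inf_le_left a).trans (himp_mul_le a b))
      ((mul_le_mul_r inf_le_right a).trans (himp_mul_le a c))))

lemma sup_himp' (a b c : α) : CRL.himp (a ⊔ b) c = CRL.himp a c ⊓ CRL.himp b c := by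
  apply le_antisymm
  · exact le_inf (himp_le_himp' le_sup_left le_rfl) (himp_le_himp' le_sup_right le_rfl)
  · apply le_himp_of
    rw [mul_sup']
    exact sup_le ((mul_le_mul_r inf_le_left a).trans (himp_mul_le a c))
      ((mul_le_mul_r inf_le_right b).trans (himp_mul_le b c))

lemma ng_sup (a b : α) : NG (a ⊔ b) = NG a ⊓ NG b := sup_himp' a b 0

lemma himp_himp' (a b c : α) : CRL.himp (a * b) c = CRL.himp a (CRL.himp b c) := by
  apply le_antisymm
  · apply le_himp_of; apply le_himp_of
    calc CRL.himp (a*b) c * a * b = CRL.himp (a*b) c * (a*b) := by rw [mul_assoc]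
    _ ≤ c := himp_mul_le _ _
  · apply le_himp_of
    calc CRL.himp a (CRL.himp b c) * (a*b)
        = (CRL.himp a (CRL.himp b c) * a) * b := (mul_assoc _ _ _).symm
    _ ≤ CRL.himp b c * b := mul_le_mul_r (himp_mul_le _ _) b
    _ ≤ c := himp_mul_le _ _

lemma mul_ngng_le (a b : α) : a * NG (NG b) ≤ NG (NG (a * b)) := by
  apply le_himp_of
  have h1 : a * NG (a*b) ≤ NG b := le_himp_of (by
    calc a * NG (a*b) * b = (a*b) * NG (a*b) := by
          rw [mul_assoc, mul_comm (NG (a*b)) b, ← mul_assoc]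
    _ ≤ 0 := (mul_ng _).le)
  calc a * NG (NG b) * NG (a*b) = NG (NG b) * (a * NG (a*b)) := by
        rw [mul_comm a (NG (NG b)), mul_assoc]
  _ ≤ NG (NG b) * NG b := mul_le_mul_l h1 _
  _ ≤ 0 := by rw [mul_comm]; exact (mul_ng _).le

lemma ngng_mul_ngng (a b : α) : NG (NG a) * NG (NG b) ≤ NG (NG (a * b)) := by
  have h1 : NG (NG b) * NG (NG a) ≤ NG (NG (NG (NG b) * a)) := mul_ngng_le _ _
  have h2 : NG (NG b) * a ≤ NG (NG (a*b)) := by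
    have := mul_ngng_le a b
    rwa [mul_comm] at this
  have h3 : NG (NG (NG (NG b) * a)) ≤ NG (NG (a*b)) := by
    have := ngng_mono h2
    rwa [ngng_ngng] at this
  calc NG (NG a) * NG (NG b) = NG (NG b) * NG (NG a) := mul_comm _ _
  _ ≤ _ := h1.trans h3

lemma E_def (a b : α) : EE a b = CRL.himp (NG a) (NG (NG b)) := rfl
lemma E_one_one : EE (1:α) 1 = 1 := by rw [E_def, NG_one, zero_himp']
lemma E_a_one (a : α) : EE a 1 = 1 := by rw [E_def, NG_one, NG_zero, himp_one']
lemma E_zero (a : α) : EE 0 a = NG (NG a) := by rw [E_def, NG_zero, one_himp']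
lemma E_mul_ng (a b : α) : EE a b * NG a ≤ NG (NG b) := himp_mul_le _ _

lemma inf_one' (a : α) : a ⊓ (1:α) = a := inf_eq_left.mpr (le_one' a)
lemma one_inf' (a : α) : (1:α) ⊓ a = a := inf_eq_right.mpr (le_one' a)
lemma sup_zero' (a : α) : a ⊔ (0:α) = a := sup_eq_left.mpr (zero_le' a)
lemma zero_inf' (a : α) : (0:α) ⊓ a = 0 := inf_eq_left.mpr (zero_le' a)

end B

section S
variable [StoneanRL α]

lemma stone' (x : α) : NG x ⊔ NG (NG x) = 1 := StoneanRL.stone x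

lemma ng_inf (x z : α) : NG x ⊓ z = NG x * z := by
  apply le_antisymm
  · have h1 : (NG x ⊓ z) * NG x ≤ NG x * z := by
      have := mul_le_mul_r (inf_le_right : NG x ⊓ z ≤ z) (NG x)
      rwa [mul_comm z (NG x)] at this
    have h2 : (NG x ⊓ z) * NG (NG x) ≤ (0:α) := by
      have := mul_le_mul_r (inf_le_left : NG x ⊓ z ≤ NG x) (NG (NG x))
      rwa [mul_ng] at this
    calc NG x ⊓ z = (NG x ⊓ z) * 1 := (mul_one _).symm
    _ = (NG x ⊓ z) * (NG x ⊔ NG (NG x)) := by rw [stone']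
    _ = (NG x ⊓ z) * NG x ⊔ (NG x ⊓ z) * NG (NG x) := mul_sup' _ _ _
    _ ≤ NG x * z ⊔ 0 := sup_le_sup h1 h2
    _ = NG x * z := sup_zero' _
  · exact le_inf mul_le_left' mul_le_right'

lemma stone_sup_bound {w a b : α} (h : w * (NG (NG a) * NG (NG b)) ≤ 0) :
    w ≤ NG a ⊔ NG b := by
  have h2 : w * NG (NG a) ≤ NG b := by
    have e : w * NG (NG a) = w * NG (NG a) * (NG b ⊔ NG (NG b)) := by rw [stone', mul_one]
    rw [e, mul_sup']
    apply sup_le mul_le_right'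
    have h3 : w * NG (NG a) * NG (NG b) ≤ 0 := by rw [mul_assoc]; exact h
    exact h3.trans (zero_le' _)
  have h1 : w ≤ NG a ⊔ w * NG (NG a) := by
    conv_lhs => rw [← mul_one w, ← stone' a]
    rw [mul_sup']
    exact sup_le_sup mul_le_right' le_rfl
  exact h1.trans (sup_le le_sup_left (h2.trans le_sup_right))

lemma ng_inf_le_sup (a b : α) : NG (a ⊓ b) ≤ NG a ⊔ NG b := by
  apply stone_sup_bound
  have h := (ngng_mul_ngng a b).trans (ngng_mono (le_inf mul_le_left' mul_le_right'))
  calc NG (a⊓b) * (NG (NG a) * NG (NG b)) ≤ NG (a⊓b) * NG (NG (a⊓b)) := mul_le_mul_l h _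
  _ = 0 := mul_ng _

lemma ng_mul_le_sup (a b : α) : NG (a * b) ≤ NG a ⊔ NG b := by
  apply stone_sup_bound
  calc NG (a*b) * (NG (NG a) * NG (NG b)) ≤ NG (a*b) * NG (NG (a*b)) :=
        mul_le_mul_l (ngng_mul_ngng a b) _
  _ = 0 := mul_ng _

lemma ngng_inf (a b : α) : NG (NG a) ⊓ NG (NG b) ≤ NG (NG (a ⊓ b)) := by
  rw [ng_inf (NG a) (NG (NG b))]
  exact (ngng_mul_ngng a b).trans (ngng_mono (le_inf mul_le_left' mul_le_right'))

lemma ng_himp_self (w : α) : CRL.himp (NG w) w = NG (NG w) := by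
  apply le_antisymm
  · apply le_himp_of
    have h1 : CRL.himp (NG w) w * NG w ≤ w := himp_mul_le _ _
    have h2 : CRL.himp (NG w) w * NG w ≤ NG w := mul_le_right'
    have h3 := le_inf h2 h1
    rwa [ng_inf, ng_mul] at h3
  · apply le_himp_of
    rw [mul_comm, mul_ng]
    exact zero_le' w

lemma E_sup (a b : α) : EE a b = NG (NG (a ⊔ b)) := by
  show CRL.himp (NG a) (CRL.himp (NG b) 0) = _
  rw [← himp_himp']
  show NG (NG a * NG b) = _
  rw [← ng_inf, ← ng_sup]

lemma ngng_himp (u v : α) : NG (NG (CRL.himp (NG u) v)) = EE u v := by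
  apply le_antisymm
  · have h1 : CRL.himp (NG u) v ≤ EE u v := himp_le_himp' le_rfl (le_ngng v)
    have h2 := ngng_mono h1
    rwa [E_sup u v, ngng_ngng, ← E_sup u v] at h2
  · have h2 : u ⊔ v ≤ CRL.himp (NG u) v :=
      sup_le (le_himp_of ((mul_ng u).le.trans (zero_le' v))) le_himp_self'
    rw [E_sup]; exact ngng_mono h2

lemma lemJ (a b c d : α) :
    EE a b ⊓ EE c d ≤ EE (a ⊔ c) (b ⊓ d) := by
  rw [E_def (a⊔c), ng_sup]
  apply le_himp_of
  have hb : (EE a b ⊓ EE c d) * (NG a ⊓ NG c) ≤ NG (NG b) :=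
    (mul_le_mul'' inf_le_left inf_le_left).trans (E_mul_ng a b)
  have hd : (EE a b ⊓ EE c d) * (NG a ⊓ NG c) ≤ NG (NG d) :=
    (mul_le_mul'' inf_le_right inf_le_right).trans (E_mul_ng c d)
  exact (le_inf hb hd).trans (ngng_inf b d)

lemma lemM (a b c d : α) : EE a b ⊓ EE c d ≤ EE (a ⊓ c) (b ⊔ d) := by
  rw [E_def]
  apply le_himp_of
  have key : (EE a b ⊓ EE c d) * (NG a ⊔ NG c) ≤ NG (NG (b ⊔ d)) := by
    rw [mul_sup']
    apply sup_le
    · exact ((mul_le_mul'' inf_le_left le_rfl).trans (E_mul_ng a b)).trans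
        (ngng_mono le_sup_left)
    · exact ((mul_le_mul'' inf_le_right le_rfl).trans (E_mul_ng c d)).trans
        (ngng_mono le_sup_right)
  exact (mul_le_mul_l (ng_inf_le_sup a c) _).trans key

lemma lemP (a b c d : α) :
    EE a b ⊓ EE c d ≤ EE (a * c) (CRL.himp a d ⊓ CRL.himp c b) := by
  rw [E_def]
  apply le_himp_of
  have h1 : (EE a b ⊓ EE c d) * NG a ≤ NG (NG (CRL.himp a d)) :=
    mul_le_right'.trans ((le_himp_of ((ng_mul a).le.trans (zero_le' d))).trans (le_ngng _))
  have h2 : (EE a b ⊓ EE c d) * NG a ≤ NG (NG (CRL.himp c b)) :=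
    ((mul_le_mul'' inf_le_left le_rfl).trans (E_mul_ng a b)).trans (ngng_mono le_himp_self')
  have h3 : (EE a b ⊓ EE c d) * NG c ≤ NG (NG (CRL.himp a d)) :=
    ((mul_le_mul'' inf_le_right le_rfl).trans (E_mul_ng c d)).trans (ngng_mono le_himp_self')
  have h4 : (EE a b ⊓ EE c d) * NG c ≤ NG (NG (CRL.himp c b)) :=
    mul_le_right'.trans ((le_himp_of ((ng_mul c).le.trans (zero_le' b))).trans (le_ngng _))
  have key : (EE a b ⊓ EE c d) * (NG a ⊔ NG c)
      ≤ NG (NG (CRL.himp a d ⊓ CRL.himp c b)) := by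
    rw [mul_sup']
    exact sup_le ((le_inf h1 h2).trans (ngng_inf _ _)) ((le_inf h3 h4).trans (ngng_inf _ _))
  exact (mul_le_mul_l (ng_mul_le_sup a c) _).trans key

lemma lemH (a b c d : α) :
    EE a b ⊓ EE c d ≤ EE (CRL.himp a c ⊓ CRL.himp d b) (a * d) := by
  rw [E_def]
  apply le_himp_of
  have hWb : (EE a b ⊓ EE c d) * NG b ≤ NG (NG a) := by
    apply le_himp_of
    calc (EE a b ⊓ EE c d) * NG b * NG a
        = (EE a b ⊓ EE c d) * NG a * NG b := by
          rw [mul_assoc, mul_comm (NG b) (NG a), mul_assoc]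
    _ ≤ NG (NG b) * NG b :=
          mul_le_mul_r ((mul_le_mul'' inf_le_left le_rfl).trans (E_mul_ng a b)) _
    _ ≤ 0 := by rw [mul_comm]; exact (mul_ng (NG b)).le
  have h1 : (EE a b ⊓ EE c d) * NG (CRL.himp a c) ≤ NG (NG (a*d)) := by
    have hle : NG (CRL.himp a c) ≤ NG c * NG (NG a) := by
      rw [← ng_inf]
      exact le_inf (ng_anti le_himp_self')
        (ng_anti (le_himp_of ((ng_mul a).le.trans (zero_le' c))))
    calc (EE a b ⊓ EE c d) * NG (CRL.himp a c)
        ≤ (EE a b ⊓ EE c d) * (NG c * NG (NG a)) := mul_le_mul_l hle _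
    _ = ((EE a b ⊓ EE c d) * NG c) * NG (NG a) := (mul_assoc _ _ _).symm
    _ ≤ NG (NG d) * NG (NG a) :=
          mul_le_mul_r ((mul_le_mul'' inf_le_right le_rfl).trans (E_mul_ng c d)) _
    _ ≤ NG (NG (d * a)) := ngng_mul_ngng d a
    _ = NG (NG (a * d)) := by rw [mul_comm d a]
  have h2 : (EE a b ⊓ EE c d) * NG (CRL.himp d b) ≤ NG (NG (a*d)) := by
    have hle : NG (CRL.himp d b) ≤ NG b * NG (NG d) := by
      rw [← ng_inf]
      exact le_inf (ng_anti le_himp_self')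
        (ng_anti (le_himp_of ((ng_mul d).le.trans (zero_le' b))))
    calc (EE a b ⊓ EE c d) * NG (CRL.himp d b)
        ≤ (EE a b ⊓ EE c d) * (NG b * NG (NG d)) := mul_le_mul_l hle _
    _ = ((EE a b ⊓ EE c d) * NG b) * NG (NG d) := (mul_assoc _ _ _).symm
    _ ≤ NG (NG a) * NG (NG d) := mul_le_mul_r hWb _
    _ ≤ NG (NG (a * d)) := ngng_mul_ngng a d
  calc (EE a b ⊓ EE c d) * NG (CRL.himp a c ⊓ CRL.himp d b)
      ≤ (EE a b ⊓ EE c d) * (NG (CRL.himp a c) ⊔ NG (CRL.himp d b)) :=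
        mul_le_mul_l (ng_inf_le_sup _ _) _
  _ = (EE a b ⊓ EE c d) * NG (CRL.himp a c) ⊔ (EE a b ⊓ EE c d) * NG (CRL.himp d b) :=
        mul_sup' _ _ _
  _ ≤ NG (NG (a * d)) := sup_le h1 h2

lemma mem_SF {F : Set α} {p : α × α} : p ∈ SF F ↔ EE p.1 p.2 ∈ F := Iff.rfl

lemma part1 {F : Set α} (hF : IsLatticeFilter F) :
    IsAdmissible (SF F) := by
  obtain ⟨⟨w, hw⟩, hup, hinf⟩ := hF
  have h1F : (1:α) ∈ F := hup w hw 1 (le_one' w)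
  refine ⟨?_, ?_, ?_, ?_⟩
  · show EE (1:α) 1 ∈ F
    rw [E_one_one]; exact h1F
  · show EE (0:α) 1 ∈ F
    rw [E_a_one]; exact h1F
  · intro a
    show EE a 1 ∈ F
    rw [E_a_one]; exact h1F
  · rintro ⟨a,b⟩ hx ⟨c,d⟩ hy
    have hx' : EE a b ∈ F := hx
    have hy' : EE c d ∈ F := hy
    have hxy : EE a b ⊓ EE c d ∈ F := hinf _ hx' _ hy'
    exact ⟨hup _ hxy _ (lemJ a b c d), hup _ hxy _ (lemM a b c d),
           hup _ hxy _ (lemP a b c d), hup _ hxy _ (lemH a b c d)⟩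

lemma dense_ngng_himp (a : α) : NG (CRL.himp (NG (NG a)) a) = 0 := by
  apply le_antisymm _ (zero_le' _)
  have h1 : NG (CRL.himp (NG (NG a)) a) ≤ NG a := ng_anti le_himp_self'
  have h2 : NG (CRL.himp (NG (NG a)) a) ≤ NG (NG a) :=
    ng_anti (le_himp_of ((mul_ng (NG a)).le.trans (zero_le' a)))
  have h3 := le_inf h1 h2
  rwa [ng_inf, mul_ng] at h3

lemma part2sub {F G : Set α} (hG : IsLatticeFilter G)
    (hdG : ∀ x : α, CRL.himp x 0 = 0 → x ∈ G)
    (hFup : ∀ a ∈ F, ∀ b : α, a ≤ b → b ∈ F)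
    (h : SF F = SF G) : F ⊆ G := by
  intro a ha
  have hna : ((0:α), a) ∈ SF F := by
    show EE 0 a ∈ F
    rw [E_zero]
    exact hFup a ha _ (le_ngng a)
  rw [h] at hna
  have hnaG : NG (NG a) ∈ G := by
    have h' : EE 0 a ∈ G := hna
    rwa [E_zero] at h'
  have hdens : CRL.himp (NG (NG a)) a ∈ G := hdG _ (dense_ngng_himp a)
  have hinf := hG.2.2 _ hnaG _ hdens
  apply hG.2.1 _ hinf a
  rw [ng_inf, mul_comm]
  exact himp_mul_le _ _

-- Part 3 constructions
variable {S : Set (α × α)}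

lemma el_ng_self (hS : IsAdmissible S) (c : α) : ((NG c, c) : α × α) ∈ S := by
  have h := (hS.2.2.2 _ (hS.2.2.1 c) _ hS.2.1).2.2.2
  have e : Twist.khimp ((c,1) : α×α) ((0:α),(1:α)) = (NG c, c) := by
    simp [Twist.khimp, himp_one', mul_one, inf_one', NG]
  rwa [e] at h

lemma el_one_zero (hS : IsAdmissible S) : (((1:α),(0:α)) : α × α) ∈ S := by
  have h := el_ng_self hS 0
  rwa [NG_zero] at h

lemma el_one_c (hS : IsAdmissible S) (c : α) : (((1:α), c) : α × α) ∈ S := by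
  have h := (hS.2.2.2 _ (el_ng_self hS c) _ (hS.2.2.1 (NG (NG c)))).1
  have e : Twist.kjoin ((NG c, c) : α×α) (NG (NG c), 1) = (1, c) := by
    simp [Twist.kjoin, stone', inf_one']
  rwa [e] at h

lemma el_c_ng (hS : IsAdmissible S) (c : α) : ((c, NG c) : α × α) ∈ S := by
  have h := (hS.2.2.2 _ (hS.2.2.1 c) _ (el_one_zero hS)).2.2.1
  have e : Twist.kmul ((c,1) : α×α) ((1:α),(0:α)) = (c, NG c) := by
    simp [Twist.kmul, himp_one', one_himp', mul_one, inf_one', NG]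
  rwa [e] at h

lemma el_zero_nghimp (hS : IsAdmissible S) (c : α) :
    (((0:α), CRL.himp (NG (NG c)) c) : α × α) ∈ S := by
  have h := (hS.2.2.2 _ (el_ng_self hS c) _ (hS.2.2.1 (NG (NG c)))).2.2.1
  have e : Twist.kmul ((NG c, c) : α×α) (NG (NG c), 1) = (0, CRL.himp (NG (NG c)) c) := by
    simp [Twist.kmul, himp_one', mul_ng, one_inf']
  rwa [e] at h

lemma fwdS (hS : IsAdmissible S) {u v : α} (h : (u,v) ∈ S) : ((0:α), EE u v) ∈ S := by
  have h1 := (hS.2.2.2 _ h _ (hS.2.2.1 (NG u))).2.2.1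
  have e1 : Twist.kmul ((u,v):α×α) (NG u, 1) = (0, CRL.himp (NG u) v) := by
    simp [Twist.kmul, himp_one', mul_ng, one_inf']
  rw [e1] at h1
  have h2 := (hS.2.2.2 _ h1 _ (hS.2.2.1 (NG (CRL.himp (NG u) v)))).2.2.1
  have e2 : Twist.kmul (((0:α), CRL.himp (NG u) v):α×α) (NG (CRL.himp (NG u) v), 1)
      = (0, EE u v) := by
    have : CRL.himp (NG (CRL.himp (NG u) v)) (CRL.himp (NG u) v) = EE u v := by
      rw [ng_himp_self, ngng_himp]
    simp [Twist.kmul, himp_one', zero_mul', zero_himp', one_inf', this]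
  rwa [e2] at h2

lemma revS (hS : IsAdmissible S) {a b : α} (h : ((0:α), EE a b) ∈ S) : (a,b) ∈ S := by
  have r2 := (hS.2.2.2 _ (el_c_ng hS a) _ h).1
  have e2 : Twist.kjoin ((a, NG a):α×α) ((0:α), EE a b) = (a, NG a ⊓ EE a b) := by
    simp [Twist.kjoin, sup_zero']
  rw [e2] at r2
  have r4 := (hS.2.2.2 _ r2 _ (el_zero_nghimp hS b)).1
  have e4 : Twist.kjoin ((a, NG a ⊓ EE a b):α×α) ((0:α), CRL.himp (NG (NG b)) b)
      = (a, NG a ⊓ EE a b ⊓ CRL.himp (NG (NG b)) b) := by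
    simp [Twist.kjoin, sup_zero']
  rw [e4] at r4
  have hv : NG a ⊓ EE a b ⊓ CRL.himp (NG (NG b)) b ≤ b := by
    have k1 : NG a ⊓ EE a b ≤ NG (NG b) := by
      rw [ng_inf, mul_comm]
      exact E_mul_ng a b
    have k2 : NG a ⊓ EE a b ⊓ CRL.himp (NG (NG b)) b
        ≤ NG (NG b) ⊓ CRL.himp (NG (NG b)) b :=
      le_inf (inf_le_left.trans k1) inf_le_right
    refine k2.trans ?_
    rw [ng_inf, mul_comm]
    exact himp_mul_le _ _
  have r6 := (hS.2.2.2 _ r4 _ (el_one_c hS b)).2.1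
  have e6 : Twist.kmeet ((a, NG a ⊓ EE a b ⊓ CRL.himp (NG (NG b)) b):α×α) ((1:α), b)
      = (a, b) := by
    simp [Twist.kmeet, inf_one', sup_eq_right.mpr hv]
  rwa [e6] at r6

lemma part3 (S : Set (α × α)) (hS : IsAdmissible S) :
    ∃ F : Set α, IsLatticeFilter F ∧ (∀ x : α, CRL.himp x 0 = 0 → x ∈ F) ∧
      S = SF F := by
  refine ⟨{c : α | ((0:α), c) ∈ S}, ⟨⟨1, hS.2.1⟩, ?_, ?_⟩, ?_, ?_⟩
  · intro c hc c' hcc'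
    have h := (hS.2.2.2 _ hc _ (el_one_c hS c')).2.1
    have e : Twist.kmeet (((0:α),c):α×α) ((1:α), c') = (0, c') := by
      simp [Twist.kmeet, zero_inf', sup_eq_right.mpr hcc']
    rwa [e] at h
  · intro c hc c' hc'
    have h := (hS.2.2.2 _ hc _ hc').1
    have e : Twist.kjoin (((0:α),c):α×α) (((0:α),c'):α×α) = (0, c ⊓ c') := by
      simp [Twist.kjoin, sup_zero']
    rwa [e] at h
  · intro x hx
    have h := el_zero_nghimp hS x
    have hngx : NG x = 0 := hx
    rw [show CRL.himp (NG (NG x)) x = x from by rw [hngx, NG_zero, one_himp']] at h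
    exact h
  · ext p
    obtain ⟨a, b⟩ := p
    constructor
    · intro h
      exact fwdS hS h
    · intro h
      exact revS hS h

end S

end SP

/-- for a Stonean residuated lattice `A`, the map
`F ↦ S_F = {(a,b) : ¬a → ¬¬b ∈ F}` sends each lattice filter containing all
dense elements to an admissible subalgebra of `K(A)`, and is a bijection from
the lattice filters containing all dense elements onto the admissible
subalgebras of `K(A)`. -/
theorem stonean_filters_biject_admissible {α : Type*} [StoneanRL α] :
    (∀ F : Set α, IsLatticeFilter F → (∀ x : α, CRL.himp x 0 = 0 → x ∈ F) →
      IsAdmissible (SF F)) ∧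
    (∀ F G : Set α,
      IsLatticeFilter F → (∀ x : α, CRL.himp x 0 = 0 → x ∈ F) →
      IsLatticeFilter G → (∀ x : α, CRL.himp x 0 = 0 → x ∈ G) →
      SF F = SF G → F = G) ∧
    (∀ S : Set (α × α), IsAdmissible S →
      ∃ F : Set α, IsLatticeFilter F ∧ (∀ x : α, CRL.himp x 0 = 0 → x ∈ F) ∧
        S = SF F) := by
  refine ⟨fun F hF _ => SP.part1 hF,
    fun F G hF hdF hG hdG h =>
      Set.Subset.antisymm (SP.part2sub hG hdG hF.2.1 h) (SP.part2sub hF hdF hG.2.1 h.symm),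
    fun S hS => SP.part3 S hS⟩
end

section
/- Let n ≥ 4 and let DP_n be the n-element drastic product chain with coatom a_1. Then: (i) the set K_n^∅ = {(x,1), (1,x), (x,a_1), (a_1,x) : x ∈ DP_n} is the universe of the smallest admissible subalgebra of the twist-product K(DP_n), i.e. K_n^∅ is itself an admissible subalgebra and every admissible subalgebra of K(DP_n) contains K_n^∅; and (ii) every sublattice of K(DP_n) that contains K_n^∅ and is closed under ∼ (where ∼(a,b) = (b,a)) is closed under the product and implication of K(DP_n), hence is the universe of an admissible subalgebra of K(DP_n). -/
/-- The top element `1` of the `n`-element drastic product chain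
`DP_n = {0 = a_{n-1} < ... < a_1 < 1}`, realized on `Fin n` (the element `a_i`
corresponds to the index `n - 1 - i`). -/
def dpTop (n : ℕ) (hn : 2 ≤ n) : Fin n := ⟨n - 1, by omega⟩

/-- The coatom `a_1` of the drastic product chain `DP_n`. -/
def dpCoatom (n : ℕ) (hn : 2 ≤ n) : Fin n := ⟨n - 2, by omega⟩

/-- The bottom element `0 = a_{n-1}` of the drastic product chain `DP_n`. -/
def dpBot (n : ℕ) (hn : 2 ≤ n) : Fin n := ⟨0, by omega⟩

/-- The drastic product: `a·b = 0` if `a ≠ 1` and `b ≠ 1`, else `a ∧ b`. -/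
def dpMul (n : ℕ) (hn : 2 ≤ n) (a b : Fin n) : Fin n :=
  if a ≠ dpTop n hn ∧ b ≠ dpTop n hn then dpBot n hn else min a b

/-- The residual of the drastic product: `x → y = 1` if `x ≤ y`, `x → y = y`
if `x = 1 > y`, and `x → y = a_1` if `y < x < 1`. -/
def dpImp (n : ℕ) (hn : 2 ≤ n) (a b : Fin n) : Fin n :=
  if a ≤ b then dpTop n hn else if a = dpTop n hn then b else dpCoatom n hn

/-- Join in the twist-product `K(DP_n)`. -/
def dpKjoin (n : ℕ) (x y : Fin n × Fin n) : Fin n × Fin n :=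
  (max x.1 y.1, min x.2 y.2)

/-- Meet in the twist-product `K(DP_n)`. -/
def dpKmeet (n : ℕ) (x y : Fin n × Fin n) : Fin n × Fin n :=
  (min x.1 y.1, max x.2 y.2)

/-- Product in the twist-product `K(DP_n)`. -/
def dpKmul (n : ℕ) (hn : 2 ≤ n) (x y : Fin n × Fin n) : Fin n × Fin n :=
  (dpMul n hn x.1 y.1, min (dpImp n hn x.1 y.2) (dpImp n hn y.1 x.2))

/-- Implication in the twist-product `K(DP_n)`. -/
def dpKhimp (n : ℕ) (hn : 2 ≤ n) (x y : Fin n × Fin n) : Fin n × Fin n :=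
  (min (dpImp n hn x.1 y.1) (dpImp n hn y.2 x.2), dpMul n hn x.1 y.2)

/-- An admissible subalgebra of `K(DP_n)`: contains `(1,1)`, `(0,1)` and
`(a,1)` for all `a`, and is closed under the twist operations. -/
def dpAdmissible (n : ℕ) (hn : 2 ≤ n) (S : Set (Fin n × Fin n)) : Prop :=
  (dpTop n hn, dpTop n hn) ∈ S ∧ (dpBot n hn, dpTop n hn) ∈ S ∧
  (∀ a : Fin n, (a, dpTop n hn) ∈ S) ∧
  ∀ x ∈ S, ∀ y ∈ S, dpKjoin n x y ∈ S ∧ dpKmeet n x y ∈ S ∧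
    dpKmul n hn x y ∈ S ∧ dpKhimp n hn x y ∈ S

/-- The set `K_n^∅ = {(x,1), (1,x), (x,a_1), (a_1,x) : x ∈ DP_n}`. -/
def dpKempty (n : ℕ) (hn : 2 ≤ n) : Set (Fin n × Fin n) :=
  {p | p.2 = dpTop n hn ∨ p.1 = dpTop n hn ∨
       p.2 = dpCoatom n hn ∨ p.1 = dpCoatom n hn}

namespace DPaux

variable {n : ℕ}

lemma le_top (h2 : 2 ≤ n) (x : Fin n) : x ≤ dpTop n h2 := by
  simp only [dpTop, Fin.le_def]; have := x.isLt; omega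

lemma bot_le' (h2 : 2 ≤ n) (x : Fin n) : dpBot n h2 ≤ x := by
  simp only [dpBot, Fin.le_def]; omega

lemma coatom_le_top (h2 : 2 ≤ n) : dpCoatom n h2 ≤ dpTop n h2 := le_top _ _

lemma coatom_ne_top (h2 : 2 ≤ n) : dpCoatom n h2 ≠ dpTop n h2 := by
  simp only [dpCoatom, dpTop, Ne, Fin.mk.injEq]; omega

lemma coatom_lt_top (h2 : 2 ≤ n) : dpCoatom n h2 < dpTop n h2 :=
  lt_of_le_of_ne (coatom_le_top h2) (coatom_ne_top h2)

lemma bot_lt_coatom (h4 : 4 ≤ n) (h2 : 2 ≤ n) : dpBot n h2 < dpCoatom n h2 := by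
  simp only [dpBot, dpCoatom, Fin.lt_def]; omega

lemma lt_top_of_ne (h2 : 2 ≤ n) {x : Fin n} (h : x ≠ dpTop n h2) : x < dpTop n h2 :=
  lt_of_le_of_ne (le_top h2 x) h

/-- `TC u` : u is top or coatom. -/
def TC (h2 : 2 ≤ n) (u : Fin n) : Prop := u = dpTop n h2 ∨ u = dpCoatom n h2

lemma min_TC (h2 : 2 ≤ n) {u v : Fin n} (hu : TC h2 u) (hv : TC h2 v) :
    TC h2 (min u v) := by
  rcases hu with hu | hu <;> rcases hv with hv | hv <;> subst hu <;> subst hv <;>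
    simp [TC, min_self, min_eq_right (coatom_le_top h2), min_eq_left (coatom_le_top h2)]

lemma max_TC (h2 : 2 ≤ n) {u : Fin n} (hu : TC h2 u) (v : Fin n) :
    TC h2 (max u v) := by
  by_cases hv : v = dpTop n h2
  · subst hv; exact Or.inl (max_eq_right (le_top h2 u))
  rcases hu with hu | hu <;> subst hu
  · exact Or.inl (max_eq_left (le_top h2 v))
  · -- v ≠ top, so v ≤ coatom
    have hvc : v ≤ dpCoatom n h2 := by
      simp only [dpCoatom, Fin.le_def]
      have := v.isLt
      have : v.val ≠ n - 1 := fun he => hv (Fin.ext he)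
      omega
    exact Or.inr (max_eq_left hvc)

lemma max_TC' (h2 : 2 ≤ n) {u : Fin n} (hu : TC h2 u) (v : Fin n) :
    TC h2 (max v u) := by rw [max_comm]; exact max_TC h2 hu v

-- dpImp lemmas
lemma imp_of_le (h2 : 2 ≤ n) {a b : Fin n} (h : a ≤ b) :
    dpImp n h2 a b = dpTop n h2 := if_pos h

lemma imp_top_right (h2 : 2 ≤ n) (a : Fin n) :
    dpImp n h2 a (dpTop n h2) = dpTop n h2 := imp_of_le h2 (le_top h2 a)

lemma imp_top_left (h2 : 2 ≤ n) (b : Fin n) :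
    dpImp n h2 (dpTop n h2) b = b := by
  unfold dpImp
  split
  · next h => exact (le_antisymm (le_top h2 b) h).symm
  · rw [if_pos rfl]

lemma imp_eq_coatom (h2 : 2 ≤ n) {a b : Fin n} (hab : ¬ a ≤ b)
    (ha : a ≠ dpTop n h2) : dpImp n h2 a b = dpCoatom n h2 := by
  unfold dpImp; rw [if_neg hab, if_neg ha]

lemma imp_cases (h2 : 2 ≤ n) {a : Fin n} (ha : a ≠ dpTop n h2) (b : Fin n) :
    TC h2 (dpImp n h2 a b) := by
  unfold dpImp TC
  rcases le_or_gt a b with h | h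
  · rw [if_pos h]; exact Or.inl rfl
  · rw [if_neg h.not_ge, if_neg ha]; exact Or.inr rfl

-- dpMul lemmas
lemma mul_top_left (h2 : 2 ≤ n) (b : Fin n) :
    dpMul n h2 (dpTop n h2) b = b := by
  unfold dpMul
  rw [if_neg (by simp), min_eq_right (le_top h2 b)]

lemma mul_top_right (h2 : 2 ≤ n) (a : Fin n) :
    dpMul n h2 a (dpTop n h2) = a := by
  unfold dpMul
  rw [if_neg (by simp), min_eq_left (le_top h2 a)]

lemma mul_bot (h2 : 2 ≤ n) {a b : Fin n} (ha : a ≠ dpTop n h2)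
    (hb : b ≠ dpTop n h2) : dpMul n h2 a b = dpBot n h2 := if_pos ⟨ha, hb⟩

end DPaux

namespace DPaux

variable {n : ℕ}

lemma mem_Kempty (h2 : 2 ≤ n) {p : Fin n × Fin n} :
    p ∈ dpKempty n h2 ↔ TC h2 p.2 ∨ TC h2 p.1 := by
  simp only [dpKempty, Set.mem_setOf_eq, TC]; tauto

/-- Key closure lemma: any `∼`-closed sublattice containing `K_n^∅` is closed
under the twist product and implication. -/
lemma closure (h2 : 2 ≤ n) (S : Set (Fin n × Fin n))
    (hK : dpKempty n h2 ⊆ S)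
    (hlat : ∀ x ∈ S, ∀ y ∈ S, dpKjoin n x y ∈ S ∧ dpKmeet n x y ∈ S)
    (hsim : ∀ x ∈ S, ((x.2, x.1) : Fin n × Fin n) ∈ S) :
    ∀ x ∈ S, ∀ y ∈ S, dpKmul n h2 x y ∈ S ∧ dpKhimp n h2 x y ∈ S := by
  have hBC : (dpBot n h2, dpCoatom n h2) ∈ S :=
    hK ((mem_Kempty h2).mpr (Or.inl (Or.inr rfl)))
  have hCB : (dpCoatom n h2, dpBot n h2) ∈ S :=
    hK ((mem_Kempty h2).mpr (Or.inr (Or.inr rfl)))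
  rintro ⟨a, b⟩ hx ⟨c, d⟩ hy
  constructor
  · -- product
    show (dpMul n h2 a c, min (dpImp n h2 a d) (dpImp n h2 c b)) ∈ S
    by_cases ha : a = dpTop n h2
    · subst ha
      rw [mul_top_left, imp_top_left]
      by_cases hc : c = dpTop n h2
      · subst hc
        rw [imp_top_left]
        exact hK ((mem_Kempty h2).mpr (Or.inr (Or.inl rfl)))
      · rcases imp_cases h2 hc b with h | h <;> rw [h]
        · rw [min_eq_left (le_top h2 d)]; exact hy
        · have := (hlat _ hy _ hBC).1
          simpa [dpKjoin, max_eq_left (bot_le' h2 c)] using this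
    · by_cases hc : c = dpTop n h2
      · subst hc
        rw [mul_top_right, imp_top_left]
        rcases imp_cases h2 ha d with h | h <;> rw [h]
        · rw [min_eq_right (le_top h2 b)]; exact hx
        · have := (hlat _ hx _ hBC).1
          simpa [dpKjoin, max_eq_left (bot_le' h2 a), min_comm] using this
      · rw [mul_bot h2 ha hc]
        exact hK ((mem_Kempty h2).mpr
          (Or.inl (min_TC h2 (imp_cases h2 ha d) (imp_cases h2 hc b))))
  · -- implication
    show (min (dpImp n h2 a c) (dpImp n h2 d b), dpMul n h2 a d) ∈ S
    by_cases ha : a = dpTop n h2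
    · subst ha
      rw [mul_top_left, imp_top_left]
      by_cases hdb : d ≤ b
      · rw [imp_of_le h2 hdb, min_eq_left (le_top h2 c)]; exact hy
      · by_cases hd : d = dpTop n h2
        · subst hd
          rw [imp_top_left]
          exact hK ((mem_Kempty h2).mpr (Or.inl (Or.inl rfl)))
        · rw [imp_eq_coatom h2 hdb hd]
          have := (hlat _ hy _ hCB).2
          simpa [dpKmeet, max_eq_left (bot_le' h2 d)] using this
    · by_cases hd : d = dpTop n h2
      · subst hd
        rw [mul_top_right, imp_top_left]
        have hx' : ((b, a) : Fin n × Fin n) ∈ S := hsim (a, b) hx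
        rcases imp_cases h2 ha c with h | h <;> rw [h]
        · rw [min_eq_right (le_top h2 b)]; exact hx'
        · have := (hlat _ hx' _ hCB).2
          simpa [dpKmeet, max_eq_left (bot_le' h2 a), min_comm] using this
      · rw [mul_bot h2 ha hd]
        exact hK ((mem_Kempty h2).mpr
          (Or.inr (min_TC h2 (imp_cases h2 ha c) (imp_cases h2 hd b))))

/-- `K_n^∅` is closed under the lattice operations. -/
lemma Kempty_lat (h2 : 2 ≤ n) :
    ∀ x ∈ dpKempty n h2, ∀ y ∈ dpKempty n h2,
      dpKjoin n x y ∈ dpKempty n h2 ∧ dpKmeet n x y ∈ dpKempty n h2 := by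
  rintro ⟨a, b⟩ hx ⟨c, d⟩ hy
  rw [mem_Kempty h2] at hx hy
  constructor
  · rw [mem_Kempty h2]
    rcases hx with hx | hx
    · rcases hy with hy | hy
      · exact Or.inl (min_TC h2 hx hy)
      · exact Or.inr (max_TC' h2 hy a)
    · exact Or.inr (max_TC h2 hx c)
  · rw [mem_Kempty h2]
    rcases hx with hx | hx
    · exact Or.inl (max_TC h2 hx d)
    · rcases hy with hy | hy
      · exact Or.inl (max_TC' h2 hy b)
      · exact Or.inr (min_TC h2 hx hy)

end DPaux

namespace DPaux

variable {n : ℕ}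

lemma minimal (h4 : 4 ≤ n) (h2 : 2 ≤ n) (S : Set (Fin n × Fin n))
    (hS : dpAdmissible n h2 S) : dpKempty n h2 ⊆ S := by
  obtain ⟨hTT, hBT, haT, hops⟩ := hS
  set T := dpTop n h2 with hT
  set C := dpCoatom n h2 with hC
  set B := dpBot n h2 with hB
  -- Step A : (T, a) ∈ S for all a
  have stepA : ∀ a : Fin n, ((T, a) : Fin n × Fin n) ∈ S := by
    intro a
    have h := (hops (a, T) (haT a) (T, T) hTT).2.2.2
    have he : dpKhimp n h2 (a, T) (T, T) = (T, a) := by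
      show (min (dpImp n h2 a T) (dpImp n h2 T T), dpMul n h2 a T) = (T, a)
      rw [imp_top_right, imp_top_right, mul_top_right, min_self]
    rwa [he] at h
  -- Step B : (x, C) ∈ S for B < x < T
  have stepB : ∀ x : Fin n, B < x → x < T → ((x, C) : Fin n × Fin n) ∈ S := by
    intro x hBx hxT
    have h := (hops (T, B) (stepA B) (x, T) (haT x)).2.2.1
    have he : dpKmul n h2 (T, B) (x, T) = (x, C) := by
      show (dpMul n h2 T x, min (dpImp n h2 T T) (dpImp n h2 x B)) = (x, C)
      rw [mul_top_left, imp_top_right, imp_eq_coatom h2 hBx.not_ge hxT.ne,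
        min_eq_right (coatom_le_top h2)]
    rwa [he] at h
  -- Step C : (C, x) ∈ S for B < x < T
  have stepC : ∀ x : Fin n, B < x → x < T → ((C, x) : Fin n × Fin n) ∈ S := by
    intro x hBx hxT
    have h := (hops (T, B) (stepA B) (T, x) (stepA x)).2.2.2
    have he : dpKhimp n h2 (T, B) (T, x) = (C, x) := by
      show (min (dpImp n h2 T T) (dpImp n h2 x B), dpMul n h2 T x) = (C, x)
      rw [mul_top_left, imp_top_right, imp_eq_coatom h2 hBx.not_ge hxT.ne,
        min_eq_right (coatom_le_top h2)]
    rwa [he] at h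
  have hBC' : B < C := bot_lt_coatom h4 h2
  have hCT' : C < T := coatom_lt_top h2
  -- Step D : (C, C) ∈ S
  have stepD : ((C, C) : Fin n × Fin n) ∈ S := stepB C hBC' hCT'
  -- Step E : (C, B) ∈ S, using z = ⟨1, _⟩ with B < z < C
  have stepE : ((C, B) : Fin n × Fin n) ∈ S := by
    set z : Fin n := ⟨1, by omega⟩ with hz
    have hBz : B < z := by simp only [hB, dpBot, Fin.lt_def, hz]; omega
    have hzC : z < C := by simp only [hC, dpCoatom, Fin.lt_def, hz]; omega
    have hzT : z < T := by simp only [hT, dpTop, Fin.lt_def, hz]; omega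
    have hzS : ((z, C) : Fin n × Fin n) ∈ S := stepB z hBz hzT
    have h := (hops (C, T) (haT C) (z, C) hzS).2.2.2
    have he : dpKhimp n h2 (C, T) (z, C) = (C, B) := by
      show (min (dpImp n h2 C z) (dpImp n h2 C T), dpMul n h2 C C) = (C, B)
      rw [imp_top_right, mul_bot h2 hCT'.ne hCT'.ne,
        imp_eq_coatom h2 hzC.not_ge hCT'.ne, min_eq_left (coatom_le_top h2)]
    rwa [he] at h
  -- Step F : (B, C) ∈ S
  have stepF : ((B, C) : Fin n × Fin n) ∈ S := by
    have h := (hops (C, C) stepD (C, B) stepE).2.2.1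
    have he : dpKmul n h2 (C, C) (C, B) = (B, C) := by
      show (dpMul n h2 C C, min (dpImp n h2 C B) (dpImp n h2 C C)) = (B, C)
      rw [mul_bot h2 hCT'.ne hCT'.ne, imp_of_le h2 le_rfl,
        imp_eq_coatom h2 hBC'.not_ge hCT'.ne, min_eq_left (coatom_le_top h2)]
    rwa [he] at h
  -- now every element of K∅ is in S
  rintro ⟨u, v⟩ hp
  have hvC : v = C → ((u, v) : Fin n × Fin n) ∈ S := by
    intro h; subst h
    by_cases hu : u = T
    · subst hu; exact stepA C
    · rcases eq_or_lt_of_le (bot_le' h2 u) with h' | h'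
      · rw [← h']; exact stepF
      · exact stepB u h' (lt_top_of_ne h2 hu)
  have huC : u = C → ((u, v) : Fin n × Fin n) ∈ S := by
    intro h; subst h
    by_cases hv : v = T
    · subst hv; exact haT C
    · rcases eq_or_lt_of_le (bot_le' h2 v) with h' | h'
      · rw [← h']; exact stepE
      · exact stepC v h' (lt_top_of_ne h2 hv)
  rcases hp with h | h | h | h
  · simp only at h; subst h; exact haT u
  · simp only at h; subst h; exact stepA v
  · exact hvC h
  · exact huC h

end DPaux

/-- for `n ≥ 4`, (i) `K_n^∅` is the smallest admissible
subalgebra of the twist-product `K(DP_n)`; (ii) every sublattice of `K(DP_n)`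
containing `K_n^∅` and closed under `∼(a,b) = (b,a)` is closed under the
product and implication of `K(DP_n)`, hence is the universe of an admissible
subalgebra. -/
theorem dp_smallest_admissible (n : ℕ) (hn : 4 ≤ n) :
    (dpAdmissible n (by omega) (dpKempty n (by omega)) ∧
      ∀ S : Set (Fin n × Fin n), dpAdmissible n (by omega) S →
        dpKempty n (by omega) ⊆ S) ∧
    (∀ S : Set (Fin n × Fin n),
      dpKempty n (by omega) ⊆ S →
      (∀ x ∈ S, ∀ y ∈ S, dpKjoin n x y ∈ S ∧ dpKmeet n x y ∈ S) →
      (∀ x ∈ S, ((x.2, x.1) : Fin n × Fin n) ∈ S) →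
      (∀ x ∈ S, ∀ y ∈ S,
        dpKmul n (by omega) x y ∈ S ∧ dpKhimp n (by omega) x y ∈ S) ∧
        dpAdmissible n (by omega) S) := by
  have h2 : 2 ≤ n := by omega
  have hsimK : ∀ x ∈ dpKempty n h2, ((x.2, x.1) : Fin n × Fin n) ∈ dpKempty n h2 := by
    intro x hx
    rw [DPaux.mem_Kempty h2] at hx ⊢
    tauto
  have hclosK := DPaux.closure h2 _ (subset_refl _) (DPaux.Kempty_lat h2) hsimK
  constructor
  · constructor
    · refine ⟨?_, ?_, ?_, ?_⟩
      · exact (DPaux.mem_Kempty h2).mpr (Or.inl (Or.inl rfl))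
      · exact (DPaux.mem_Kempty h2).mpr (Or.inl (Or.inl rfl))
      · intro a; exact (DPaux.mem_Kempty h2).mpr (Or.inl (Or.inl rfl))
      · intro x hx y hy
        exact ⟨(DPaux.Kempty_lat h2 x hx y hy).1, (DPaux.Kempty_lat h2 x hx y hy).2,
          (hclosK x hx y hy).1, (hclosK x hx y hy).2⟩
    · exact fun S hS => DPaux.minimal hn h2 S hS
  · intro S hK hlat hsim
    have hcl := DPaux.closure h2 S hK hlat hsim
    refine ⟨hcl, ?_, ?_, ?_, ?_⟩
    · exact hK ((DPaux.mem_Kempty h2).mpr (Or.inl (Or.inl rfl)))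
    · exact hK ((DPaux.mem_Kempty h2).mpr (Or.inl (Or.inl rfl)))
    · intro a; exact hK ((DPaux.mem_Kempty h2).mpr (Or.inl (Or.inl rfl)))
    · intro x hx y hy
      exact ⟨(hlat x hx y hy).1, (hlat x hx y hy).2,
        (hcl x hx y hy).1, (hcl x hx y hy).2⟩
end

section
/- Let A be a bounded K-lattice with at least two elements whose lattice order is total. Then A has exactly three elements, namely 0 < 1 < ∼0 (where ∼x := x → 1); that is, A is isomorphic to the three-element bounded K-lattice K_3. -/
namespace K3Aux

variable {α : Type*} [BKLattice α]

lemma himp_mul_le (b c : α) : CRL.himp b c * b ≤ c := (CRL.resid _ _ _).mpr le_rfl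

lemma mul_le_mul_right'' {a b : α} (h : a ≤ b) (c : α) : a * c ≤ b * c :=
  (CRL.resid _ _ _).mpr (h.trans ((CRL.resid _ _ _).mp le_rfl))

lemma nn (x : α) : CRL.himp (CRL.himp x 1) 1 = x := KLattice.one_involutive x

lemma n_anti {a b : α} (h : a ≤ b) : CRL.himp b 1 ≤ CRL.himp a 1 := by
  rw [← CRL.resid]
  calc CRL.himp b 1 * a ≤ CRL.himp b 1 * b := by
        rw [mul_comm _ a, mul_comm _ b]; exact mul_le_mul_right'' h _
    _ ≤ 1 := himp_mul_le b 1

lemma one_himp (y : α) : CRL.himp 1 y = y :=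
  le_antisymm (by have := himp_mul_le (1 : α) y; rwa [mul_one] at this)
    ((CRL.resid _ _ _).mp (by rw [mul_one]))

lemma n_one : CRL.himp (1 : α) 1 = 1 := one_himp 1

lemma le_top (x : α) : x ≤ CRL.himp 0 1 := by
  have := n_anti (BKLattice.zero_le (CRL.himp x 1))
  rwa [nn] at this

/-- In a totally ordered bounded K-lattice, a negative element `≠ 1` is `0`. -/
lemma small (htot : ∀ a b : α, a ≤ b ∨ b ≤ a) {a : α} (h1 : a ≤ 1) (h2 : a ≠ 1) :
    a = 0 := by
  have key : ∀ u : α, 1 ≤ u → a * u = a := by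
    intro u hu
    have hk : (a * u) ⊓ 1 = a := by
      rw [KLattice.K1, inf_eq_left.mpr h1, inf_eq_right.mpr hu, mul_one]
    rcases htot (a * u) 1 with h | h
    · rwa [inf_eq_left.mpr h] at hk
    · rw [inf_eq_right.mpr h] at hk; exact absurd hk.symm h2
  have htopa : a * CRL.himp 0 1 = a := key _ (le_top 1)
  have hna : a * CRL.himp a 1 = a := key _ (by have := n_anti h1; rwa [n_one] at this)
  have h3 : CRL.himp (a * CRL.himp 0 1) 1 * a ≤ (0 : α) := by
    have h4 : (CRL.himp (a * CRL.himp 0 1) 1 * a) * CRL.himp 0 1 ≤ 1 := by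
      rw [mul_assoc]; exact himp_mul_le _ _
    have h5 := (CRL.resid _ _ _).mp h4
    rwa [nn] at h5
  rw [htopa] at h3
  refine le_antisymm ?_ (BKLattice.zero_le a)
  calc a = CRL.himp a 1 * a := by rw [mul_comm, hna]
    _ ≤ 0 := h3

end K3Aux

/-- a bounded K-lattice with at least two elements whose lattice
order is total has exactly three elements `0 < 1 < ∼0` (where `∼x = x → 1`),
i.e. it is isomorphic to `K_3`. -/
theorem totally_ordered_bounded_klattice {α : Type*} [BKLattice α]
    (htot : ∀ a b : α, a ≤ b ∨ b ≤ a)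
    (hnt : ∃ a b : α, a ≠ b) :
    (0 : α) < 1 ∧ (1 : α) < CRL.himp 0 1 ∧
    ∀ x : α, x = 0 ∨ x = 1 ∨ x = CRL.himp 0 1 := by
  open K3Aux in
  obtain ⟨a, b, hab⟩ := hnt
  have h01 : (0 : α) ≠ 1 := by
    intro h
    apply hab
    have ht : ∀ x : α, x = 0 := by
      intro x
      have hx : x ≤ CRL.himp 0 1 := K3Aux.le_top x
      rw [h, K3Aux.n_one] at hx
      exact le_antisymm (hx.trans_eq h.symm) (BKLattice.zero_le x)
    rw [ht a, ht b]
  have h1t : (1 : α) ≠ CRL.himp 0 1 := by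
    intro h
    apply h01
    have h' := congrArg (fun z => CRL.himp z 1) h
    rw [K3Aux.n_one, K3Aux.nn] at h'
    exact h'.symm
  refine ⟨lt_of_le_of_ne (BKLattice.zero_le 1) h01,
    lt_of_le_of_ne (K3Aux.le_top 1) h1t, ?_⟩
  intro x
  rcases htot x 1 with h | h
  · by_cases hx1 : x = 1
    · exact Or.inr (Or.inl hx1)
    · exact Or.inl (K3Aux.small htot h hx1)
  · have hnx : CRL.himp x 1 ≤ 1 := by
      have := K3Aux.n_anti h; rwa [K3Aux.n_one] at this
    by_cases hh : CRL.himp x 1 = 1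
    · exact Or.inr (Or.inl (by rw [← K3Aux.nn x, hh, K3Aux.n_one]))
    · exact Or.inr (Or.inr (by rw [← K3Aux.nn x, K3Aux.small htot hnx hh]))
end
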